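/- arXiv:2404.04613 — 7 statements merged into one kernel-verified Lean document; each statement's English description precedes it below -/
import Mathlib

section
/- Let P be a convex n-gon in ℝ² and let k be a natural number with k > n. Then no guard set G ⊆ P with exactly k guards k-covers P. -/
open Set

noncomputable section

/-- The Euclidean plane ℝ². -/
abbrev Plane : Type := EuclideanSpace ℝ (Fin 2)

/-- `P` is a convex `n`-gon with vertex set `V`: `V` is a finite set of exactly `n ≥ 3`
points, `P` is its convex hull, and each point of `V` is an extreme point of `P`. -/
def IsConvexPolygon (n : ℕ) (V : Finset Plane) (P : Set Plane) : Prop :=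
  3 ≤ n ∧ V.card = n ∧ P = convexHull ℝ (V : Set Plane) ∧
    ∀ v ∈ V, v ∈ Set.extremePoints ℝ P

/-- Point `p` is hidden from guard `g` (w.r.t. guard set `G`): some other guard `b ∈ G`
lies strictly between `g` and `p`. -/
def Hidden (G : Finset Plane) (g p : Plane) : Prop :=
  ∃ b ∈ G, b ≠ g ∧ b ∈ openSegment ℝ g p

/-- `G` `k`-covers `P`: every point of `P` is visible from at least `k` guards of `G`. -/
def KCovers (G : Finset Plane) (P : Set Plane) (k : ℕ) : Prop :=
  ∀ p ∈ P, k ≤ {g ∈ (G : Set Plane) | ¬ Hidden G g p}.ncard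

/-- `W` is a wedge: a closed planar convex cone with apex `a` spanned by two
linearly independent directions `u`, `v`. -/
def IsWedge (W : Set Plane) : Prop :=
  ∃ a u v : Plane, LinearIndependent ℝ ![u, v] ∧
    W = {x | ∃ s t : ℝ, 0 ≤ s ∧ 0 ≤ t ∧ x = a + s • u + t • v}

/-!
If `k` guards `k`-cover `P`, every point of `P` is seen by every guard: no guard lies strictly
between another guard and a point of `P`. Then no guard is interior (extend the segment from
another guard beyond it), and a guard `b` that is not a vertex lies strictly inside an edge of `P`
whose supporting line carries no other guard, so both endpoints of that edge are unguarded
vertices. A vertex lies on at most two edges, so double counting these (guard, endpoint) incidences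
gives #(non-vertex guards) ≤ #(unguarded vertices), that is, `k ≤ n`.
-/

open Module

section ConvexGeometry

variable {E : Type*} [AddCommGroup E] [Module ℝ E]

theorem lineMap_mem_openSegment_lineMap (a b : E) {s r t : ℝ} (hsr : s < r) (hrt : r < t) :
    AffineMap.lineMap a b r ∈
      openSegment ℝ (AffineMap.lineMap a b s) (AffineMap.lineMap a b t) := by
  rw [← image_openSegment, openSegment_eq_Ioo (hsr.trans hrt)]
  exact mem_image_of_mem _ ⟨hsr, hrt⟩

theorem mem_openSegment_or_of_mem_affineSpan_pair {u w b g : E} (hb : b ∈ openSegment ℝ u w)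
    (hg : g ∈ line[ℝ, u, w]) (hgb : g ≠ b) :
    b ∈ openSegment ℝ g u ∨ b ∈ openSegment ℝ g w := by
  rw [openSegment_eq_image_lineMap] at hb
  obtain ⟨s, ⟨hs0, hs1⟩, rfl⟩ := hb
  obtain ⟨τ, rfl⟩ := mem_affineSpan_pair_iff_exists_lineMap_eq.1 hg
  rcases lt_or_gt_of_ne (fun h : τ = s => hgb (h ▸ rfl)) with h | h
  · right
    simpa using lineMap_mem_openSegment_lineMap u w h hs1
  · left
    rw [openSegment_symm]
    simpa using lineMap_mem_openSegment_lineMap u w hs0 h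

theorem not_collinear_of_mem_extremePoints {A : Set E} {x y z : E} (hx : x ∈ A.extremePoints ℝ)
    (hy : y ∈ A.extremePoints ℝ) (hz : z ∈ A.extremePoints ℝ) (hxy : x ≠ y) (hxz : x ≠ z)
    (hyz : y ≠ z) : ¬ Collinear ℝ {x, y, z} := by
  have not_wbtw : ∀ {p q r : E}, p ∈ A → q ∈ A.extremePoints ℝ → r ∈ A → p ≠ q → r ≠ q →
      ¬ Wbtw ℝ p q r := fun hp hq hr hpq hrq hw =>
    hpq (hq.2 hp hr (mem_openSegment_of_ne_left_right hpq hrq hw.mem_segment))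
  intro h
  rcases h.wbtw_or_wbtw_or_wbtw with h | h | h
  · exact not_wbtw hx.1 hy hz.1 hxy hyz.symm h
  · exact not_wbtw hy.1 hz hx.1 hyz hxz h
  · exact not_wbtw hz.1 hx hy.1 hxz.symm hxy.symm h

theorem Finset.mem_convexHull_filter_of_le {V : Finset E} (f : Dual ℝ E) {b : E}
    (hb : b ∈ convexHull ℝ (V : Set E)) (hle : ∀ x ∈ V, f x ≤ f b) :
    b ∈ convexHull ℝ (V.filter (fun x => f x = f b) : Set E) := by
  classical
  obtain ⟨w, hw0, hw1, hwb⟩ := Finset.mem_convexHull'.1 hb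
  have hgap : ∑ y ∈ V, w y * (f b - f y) = 0 := by
    simp only [mul_sub, Finset.sum_sub_distrib, ← Finset.sum_mul, hw1, one_mul]
    rw [← hwb]
    simp
  have hface : ∀ y ∈ V, w y ≠ 0 → f y = f b := fun y hy hwy => by
    have := (Finset.sum_eq_zero_iff_of_nonneg fun y hy =>
      mul_nonneg (hw0 y hy) (sub_nonneg.2 (hle y hy))).1 hgap y hy
    rcases mul_eq_zero.1 this with h | h
    · exact absurd h hwy
    · linarith
  refine Finset.mem_convexHull'.2 ⟨w, fun y hy => hw0 y (Finset.mem_filter.1 hy).1, ?_, ?_⟩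
  · rwa [Finset.sum_filter_of_ne hface]
  · rwa [Finset.sum_filter_of_ne fun y hy hwy => hface y hy (left_ne_zero_of_smul hwy)]

theorem exists_mem_openSegment_of_collinear {S : Set E} (hS : Collinear ℝ S) {b : E}
    (hb : b ∈ convexHull ℝ S) (hbS : b ∉ S) : ∃ u ∈ S, ∃ w ∈ S, b ∈ openSegment ℝ u w := by
  classical
  rw [convexHull_eq_union] at hb
  simp only [mem_iUnion] at hb
  obtain ⟨t, htS, hti, hbt⟩ := hb
  have hcard : t.card ≤ 2 := by
    rcases t.eq_empty_or_nonempty with rfl | ht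
    · simp
    have : Nonempty t := ht.to_subtype
    have ht_col : Collinear ℝ (range ((↑) : t → E)) := hS.subset (by simpa using htS)
    have := ht_col.finiteDimensional_vectorSpan
    have hrank := hti.finrank_vectorSpan_add_one
    have := collinear_iff_finrank_le_one.1 ht_col
    rw [Fintype.card_coe] at hrank
    omega
  obtain h | h | h : t.card = 0 ∨ t.card = 1 ∨ t.card = 2 := by omega
  · simp [Finset.card_eq_zero.1 h] at hbt
  · obtain ⟨u, rfl⟩ := Finset.card_eq_one.1 h
    simp only [Finset.coe_singleton, convexHull_singleton, mem_singleton_iff] at hbt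
    exact absurd (htS (by simp [hbt])) hbS
  · obtain ⟨u, w, -, rfl⟩ := Finset.card_eq_two.1 h
    rw [Finset.coe_pair] at htS hbt
    rw [convexHull_pair] at hbt
    have hu : u ∈ S := htS (by simp)
    have hw : w ∈ S := htS (by simp)
    exact ⟨u, hu, w, hw, mem_openSegment_of_ne_left_right (fun h => hbS (h ▸ hu))
      (fun h => hbS (h ▸ hw)) hbt⟩

end ConvexGeometry

theorem exists_mem_openSegment_of_mem_interior {E : Type*} [AddCommGroup E] [Module ℝ E]
    [TopologicalSpace E] [IsTopologicalAddGroup E] [ContinuousSMul ℝ E] {s : Set E} {b : E}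
    (hb : b ∈ interior s) (g : E) : ∃ p ∈ s, b ∈ openSegment ℝ g p := by
  have hcont : Continuous (AffineMap.lineMap g b : ℝ → E) := AffineMap.lineMap_continuous
  have hnhds : ∀ᶠ t in nhds (1 : ℝ), AffineMap.lineMap g b t ∈ interior s :=
    hcont.continuousAt.preimage_mem_nhds (by simpa using isOpen_interior.mem_nhds hb)
  obtain ⟨t, ht, hts⟩ := hnhds.exists_gt
  refine ⟨_, interior_subset hts, ?_⟩
  simpa using lineMap_mem_openSegment_lineMap g b zero_lt_one ht

section TwoDimensional

variable {E : Type*} [AddCommGroup E] [Module ℝ E] [FiniteDimensional ℝ E]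

theorem collinear_setOf_eq (hE : finrank ℝ E = 2) {f : Dual ℝ E} (hf : f ≠ 0) (c : ℝ) :
    Collinear ℝ {x | f x = c} := by
  have hspan : vectorSpan ℝ {x | f x = c} ≤ LinearMap.ker f := by
    rw [vectorSpan_def, Submodule.span_le]
    rintro _ ⟨x, hx, y, hy, rfl⟩
    simp_all
  have hker := f.finrank_ker_add_one_of_ne_zero hf
  rw [collinear_iff_finrank_le_one]
  have := Submodule.finrank_mono hspan
  omega

theorem setOf_eq_subset_of_ne (hE : finrank ℝ E = 2) {f g : Dual ℝ E} (hg : g ≠ 0)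
    {c d : ℝ} {p q : E} (hpq : p ≠ q) (hfp : f p = c) (hfq : f q = c) (hgp : g p = d)
    (hgq : g q = d) : {x | g x = d} ⊆ {x | f x = c} := by
  intro x hx
  obtain ⟨t, rfl⟩ := mem_affineSpan_pair_iff_exists_lineMap_eq.1 <|
    (collinear_setOf_eq hE hg d).mem_affineSpan_of_mem_of_ne hgp hgq hx hpq
  simp only [mem_ofPred_eq, AffineMap.lineMap_apply_module, map_add, map_smul, hfp, hfq,
    smul_eq_mul]
  ring

theorem card_le_two_of_map_eq_zero_of_map_lt_zero (hE : finrank ℝ E = 2) {ι : Type*}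
    {T : Finset ι} (d : ι → E) (f : ι → Dual ℝ E) (hzero : ∀ i ∈ T, f i (d i) = 0)
    (hneg : ∀ i ∈ T, ∀ j ∈ T, i ≠ j → f i (d j) < 0) : T.card ≤ 2 := by
  by_contra! hT
  obtain ⟨i, hi, j, hj, l, hl, hij, hil, hjl⟩ := Finset.two_lt_card.1 hT
  have hindep : LinearIndependent ℝ ![d i, d j] := by
    refine LinearIndependent.pair_iff.2 fun s t hst => ⟨?_, ?_⟩
    · have := congrArg (f j) hst
      simp only [map_add, map_smul, hzero j hj, smul_eq_mul, mul_zero, add_zero,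
        map_zero] at this
      exact (mul_eq_zero.1 this).resolve_right (hneg j hj i hi hij.symm).ne
    · have := congrArg (f i) hst
      simp only [map_add, map_smul, hzero i hi, smul_eq_mul, mul_zero, zero_add,
        map_zero] at this
      exact (mul_eq_zero.1 this).resolve_right (hneg i hi j hj hij).ne
  have hspan := hindep.span_eq_top_of_card_eq_finrank' (by simp [hE])
  obtain ⟨c, hc⟩ := (Submodule.mem_span_range_iff_exists_fun ℝ).1
    (hspan ▸ Submodule.mem_top : d l ∈ Submodule.span ℝ (range ![d i, d j]))
  simp only [Fin.sum_univ_two, Matrix.cons_val_zero, Matrix.cons_val_one] at hc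
  -- `d l = c 0 • d i + c 1 • d j`: evaluating `f j` and `f i` forces `c 0, c 1 > 0`,
  -- which is incompatible with `f l (d l) = 0`
  have hfi := congrArg (f i) hc
  have hfj := congrArg (f j) hc
  have hfl := congrArg (f l) hc
  simp only [map_add, map_smul, smul_eq_mul, hzero i hi, hzero j hj, hzero l hl] at hfi hfj hfl
  have hc0 : 0 < c 0 := by nlinarith [hneg j hj i hi hij.symm, hneg j hj l hl hjl]
  have hc1 : 0 < c 1 := by nlinarith [hneg i hi j hj hij, hneg i hi l hl hil]
  nlinarith [hneg l hl i hi hil.symm, hneg l hl j hj hjl.symm]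

end TwoDimensional

section Guards

variable {E : Type*} [AddCommGroup E] [Module ℝ E]

def Unobstructed (G : Finset E) (P : Set E) : Prop :=
  ∀ g ∈ G, ∀ b ∈ G, b ≠ g → ∀ p ∈ P, b ∉ openSegment ℝ g p

/-- `f` cuts out an edge of `P` through `b`: the supporting line `f = f b` passes through two
points `u ≠ w` of `V` with `b` strictly between them. -/
structure IsEdgeFunctional (P : Set E) (V : Finset E) (f : Dual ℝ E) (b : E) : Prop where
  ne_zero : f ≠ 0
  le : ∀ x ∈ P, f x ≤ f b
  exists_vertices : ∃ u ∈ V, ∃ w ∈ V, u ≠ w ∧ f u = f b ∧ f w = f b ∧ b ∈ openSegment ℝ u w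

variable {G V : Finset E} {P : Set E}

theorem Unobstructed.notMem_interior [TopologicalSpace E] [IsTopologicalAddGroup E]
    [ContinuousSMul ℝ E] (hG : Unobstructed G P) {g b : E} (hg : g ∈ G) (hb : b ∈ G)
    (hgb : g ≠ b) : b ∉ interior P := fun hint =>
  let ⟨p, hp, hbp⟩ := exists_mem_openSegment_of_mem_interior hint g
  hG g hg b hb hgb.symm p hp hbp

variable [FiniteDimensional ℝ E]

theorem Unobstructed.eq_of_map_eq (hE : finrank ℝ E = 2) (hG : Unobstructed G P)
    (hVP : ↑V ⊆ P) {f : Dual ℝ E} {b g : E} (hf : IsEdgeFunctional P V f b) (hb : b ∈ G)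
    (hg : g ∈ G) (hfg : f g = f b) : g = b := by
  obtain ⟨u, hu, w, hw, huw, hfu, hfw, hbuw⟩ := hf.exists_vertices
  by_contra hgb
  have hline : g ∈ line[ℝ, u, w] :=
    (collinear_setOf_eq hE hf.ne_zero (f b)).mem_affineSpan_of_mem_of_ne hfu hfw hfg huw
  rcases mem_openSegment_or_of_mem_affineSpan_pair hbuw hline hgb with h | h
  · exact hG g hg b hb (Ne.symm hgb) u (hVP hu) h
  · exact hG g hg b hb (Ne.symm hgb) w (hVP hw) h

theorem Unobstructed.card_filter_le_two (hE : finrank ℝ E = 2) (hG : Unobstructed G P)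
    (hVP : ↑V ⊆ P) {B : Finset E} (hBG : B ⊆ G) {f : E → Dual ℝ E}
    (hf : ∀ b ∈ B, IsEdgeFunctional P V (f b) b) (v : E) :
    (B.filter fun b => f b v = f b b).card ≤ 2 := by
  set T := B.filter fun b => f b v = f b b
  have hother : ∀ b ∈ T, ∃ o ∈ V, o ≠ v ∧ f b o = f b b := by
    intro b hb
    obtain ⟨u, hu, w, hw, huw, hfu, hfw, -⟩ := (hf b (Finset.mem_filter.1 hb).1).exists_vertices
    by_cases huv : u = v
    · exact ⟨w, hw, fun h => huw (huv.trans h.symm), hfw⟩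
    · exact ⟨u, hu, huv, hfu⟩
  choose! o hoV hov hfo using hother
  refine card_le_two_of_map_eq_zero_of_map_lt_zero hE (fun b => o b - v) f
    (fun b hb => by simp [hfo b hb, (Finset.mem_filter.1 hb).2]) ?_
  intro b hb b' hb' hbb'
  obtain ⟨hbB, hfv⟩ := Finset.mem_filter.1 hb
  obtain ⟨hb'B, hf'v⟩ := Finset.mem_filter.1 hb'
  have hle : f b (o b') ≤ f b v := hfv ▸ (hf b hbB).le _ (hVP (hoV b' hb'))
  refine (map_sub (f b) _ _).symm ▸ sub_neg.2 (hle.lt_of_ne fun h => hbb' ?_)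
  -- the lines of `b` and `b'` share the points `v ≠ o b'`, so `b'` is a guard on the line of `b`
  have hsub := setOf_eq_subset_of_ne hE (hf b' hb'B).ne_zero (hov b' hb').symm hfv
    (h.trans hfv) hf'v (hfo b' hb')
  exact (hG.eq_of_map_eq hE hVP (hf b hbB) (hBG hbB) (hBG hb'B) (hsub rfl)).symm

theorem Unobstructed.card_le (hE : finrank ℝ E = 2) (hG : Unobstructed G P) (hVP : ↑V ⊆ P)
    (hedge : ∀ b ∈ G, b ∉ V → ∃ f, IsEdgeFunctional P V f b) : G.card ≤ V.card := by
  classical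
  choose! f hf using hedge
  have hB : ∀ b ∈ G \ V, IsEdgeFunctional P V (f b) b := fun b hb =>
    hf b (Finset.mem_sdiff.1 hb).1 (Finset.mem_sdiff.1 hb).2
  have hcount : (G \ V).card * 2 ≤ (V \ G).card * 2 := by
    refine Finset.card_mul_le_card_mul (fun b x => f b x = f b b) (fun b hb => ?_)
      (fun v _ => hG.card_filter_le_two hE hVP Finset.sdiff_subset hB v)
    obtain ⟨hbG, hbV⟩ := Finset.mem_sdiff.1 hb
    obtain ⟨u, hu, w, hw, huw, hfu, hfw, -⟩ := (hB b hb).exists_vertices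
    have hnotG : ∀ x ∈ V, f b x = f b b → x ∉ G := fun x hx hfx hxG =>
      hbV (hG.eq_of_map_eq hE hVP (hB b hb) hbG hxG hfx ▸ hx)
    exact Finset.one_lt_card.2 ⟨u, Finset.mem_filter.2 ⟨Finset.mem_sdiff.2 ⟨hu, hnotG u hu hfu⟩,
      hfu⟩, w, Finset.mem_filter.2 ⟨Finset.mem_sdiff.2 ⟨hw, hnotG w hw hfw⟩, hfw⟩, huw⟩
  calc G.card = (G \ V).card + (G ∩ V).card := (Finset.card_sdiff_add_card_inter G V).symm
    _ ≤ (V \ G).card + (V ∩ G).card := by rw [Finset.inter_comm]; omega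
    _ = V.card := Finset.card_sdiff_add_card_inter V G

end Guards

theorem finrank_plane : finrank ℝ Plane = 2 := by
  simp

namespace IsConvexPolygon

variable {n : ℕ} {V : Finset Plane} {P : Set Plane}

theorem interior_nonempty (hP : IsConvexPolygon n V P) : (interior P).Nonempty := by
  obtain ⟨hn, hVn, rfl, hext⟩ := hP
  obtain ⟨a, ha, b, hb, c, hc, hab, hac, hbc⟩ := Finset.two_lt_card.1 (hVn ▸ hn)
  have hind : AffineIndependent ℝ ![a, b, c] := affineIndependent_iff_not_collinear_set.2 <|
    not_collinear_of_mem_extremePoints (hext a ha) (hext b hb) (hext c hc) hab hac hbc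
  have htop : affineSpan ℝ (range ![a, b, c]) = ⊤ :=
    hind.affineSpan_eq_top_iff_card_eq_finrank_add_one.2 (by simp)
  rw [(convex_convexHull ℝ _).interior_nonempty_iff_affineSpan_eq_top, affineSpan_convexHull,
    eq_top_iff, ← htop]
  refine affineSpan_mono ℝ (range_subset_iff.2 fun i => ?_)
  fin_cases i <;> simp [ha, hb, hc]

theorem exists_isEdgeFunctional (hP : IsConvexPolygon n V P) {b : Plane} (hbP : b ∈ P)
    (hbint : b ∉ interior P) (hbV : b ∉ V) : ∃ f, IsEdgeFunctional P V f b := by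
  have hint := hP.interior_nonempty
  obtain ⟨-, -, rfl, -⟩ := hP
  obtain ⟨f, hf0, hfle⟩ :=
    geometric_hahn_banach_of_nonempty_interior_point (convex_convexHull ℝ _) hbint hint
  have hf0' : (f : Dual ℝ Plane) ≠ 0 := ContinuousLinearMap.coe_injective.ne hf0
  have hbS := Finset.mem_convexHull_filter_of_le (f : Dual ℝ Plane) hbP
    fun x hx => hfle x (subset_convexHull ℝ _ hx)
  have hS : Collinear ℝ (V.filter fun x => f x = f b : Set Plane) :=
    (collinear_setOf_eq finrank_plane hf0' (f b)).subset fun x hx => (Finset.mem_filter.1 hx).2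
  obtain ⟨u, hu, w, hw, hbuw⟩ := exists_mem_openSegment_of_collinear hS hbS
    fun h => hbV (Finset.mem_filter.1 h).1
  obtain ⟨huV, hfu⟩ := Finset.mem_filter.1 hu
  obtain ⟨hwV, hfw⟩ := Finset.mem_filter.1 hw
  have huw : u ≠ w := by
    rintro rfl
    rw [openSegment_same, mem_singleton_iff] at hbuw
    exact hbV (hbuw ▸ huV)
  exact ⟨f, ⟨hf0', hfle, u, huV, w, hwV, huw, hfu, hfw, hbuw⟩⟩

theorem card_le_of_unobstructed (hP : IsConvexPolygon n V P) {G : Finset Plane} (hGP : ↑G ⊆ P)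
    (hG : Unobstructed G P) : G.card ≤ n := by
  obtain ⟨hn, hVn, hPV, -⟩ := id hP
  rcases le_or_gt G.card 1 with hG1 | hG1
  · omega
  obtain ⟨g₁, hg₁, g₂, hg₂, hg₁₂⟩ := Finset.one_lt_card.1 hG1
  have hint : ∀ b ∈ G, b ∉ interior P := fun b hb => by
    by_cases h : g₁ = b
    · exact hG.notMem_interior hg₂ hb (h ▸ hg₁₂.symm)
    · exact hG.notMem_interior hg₁ hb h
  exact hVn ▸ hG.card_le finrank_plane (hPV ▸ subset_convexHull ℝ _)
    fun b hb hbV => hP.exists_isEdgeFunctional (hGP hb) (hint b hb) hbV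

end IsConvexPolygon

theorem KCovers.unobstructed {G : Finset Plane} {P : Set Plane} (h : KCovers G P G.card) :
    Unobstructed G P := by
  intro g hg b hb hbg p hp hbp
  have hall : {g ∈ (G : Set Plane) | ¬ Hidden G g p} = G :=
    eq_of_subset_of_ncard_le (fun x hx => hx.1) (by simpa using h p hp)
  have hvis : g ∈ {g ∈ (G : Set Plane) | ¬ Hidden G g p} := by rw [hall]; exact hg
  exact hvis.2 ⟨b, hb, hbg, hbp⟩

/-- If k > n then no guard set of exactly k guards k-covers the
convex n-gon P. -/
theorem statement1 (n k : ℕ) (V : Finset Plane) (P : Set Plane)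
    (hP : IsConvexPolygon n V P) (hk : k > n) :
    ∀ G : Finset Plane, ↑G ⊆ P → G.card = k → ¬ KCovers G P k := by
  intro G hGP hGk hcov
  have := hP.card_le_of_unobstructed hGP (hGk ▸ hcov : KCovers G P G.card).unobstructed
  omega
end
end

section
/- Let P be a convex n-gon in ℝ² and let k ≥ 1 be a natural number. Then there exists a guard set G ⊆ P with exactly k + 2 guards that k-covers P. -/
open Set

noncomputable section

/-!
Choose the `k + 2` guards in general position inside `P`: no three collinear, and no point
other than a guard on three lines spanned by pairs of guards. If `g` is hidden from `p`
behind `b`, the line `gb` passes through `p`, and distinct hidden guards give distinct lines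
(otherwise two guards would hide each other), so at most two guards are hidden from any point.
Such configurations of any size exist in a set with nonempty interior: a new guard only has to
avoid finitely many lines, a null set. The polygon has nonempty interior because its at least
three vertices are extreme points, hence not collinear.
-/

open MeasureTheory

section AffineGeometry

variable {E : Type*} [AddCommGroup E] [Module ℝ E]

theorem affineSpan_pair_eq_of_mem {a b x y : E} (hxy : x ≠ y) (hx : x ∈ line[ℝ, a, b])
    (hy : y ∈ line[ℝ, a, b]) : line[ℝ, x, y] = line[ℝ, a, b] := by
  refine le_antisymm (affineSpan_pair_le_of_mem_of_mem hx hy)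
    (affineSpan_pair_le_of_mem_of_mem ?_ ?_)
  · exact (collinear_triple_of_mem_affineSpan_pair hx hy (left_mem_affineSpan_pair ℝ a b)
      ).mem_affineSpan_of_mem_of_ne (by simp) (by simp) (by simp) hxy
  · exact (collinear_triple_of_mem_affineSpan_pair hx hy (right_mem_affineSpan_pair ℝ a b)
      ).mem_affineSpan_of_mem_of_ne (by simp) (by simp) (by simp) hxy

theorem wbtw_of_mem_openSegment {g b p : E} (h : b ∈ openSegment ℝ g p) : Wbtw ℝ g b p :=
  mem_segment_iff_wbtw.1 (openSegment_subset_segment ℝ g p h)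

theorem mem_affineSpan_pair_of_mem_openSegment {g b p : E} (hgb : g ≠ b)
    (h : b ∈ openSegment ℝ g p) : p ∈ line[ℝ, g, b] :=
  (wbtw_of_mem_openSegment h).collinear.mem_affineSpan_of_mem_of_ne (by simp) (by simp)
    (by simp) hgb

theorem affineSpan_pair_ne_top (hE : 2 ≤ Module.finrank ℝ E) (a b : E) :
    line[ℝ, a, b] ≠ ⊤ := by
  intro h
  have := collinear_iff_finrank_le_one.1 (collinear_pair ℝ a b)
  rw [← direction_affineSpan, h, AffineSubspace.direction_top, finrank_top] at this
  omega

theorem Collinear.eq_or_eq_or_eq_of_subset_extremePoints {s : Set E} (hcol : Collinear ℝ s)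
    (hext : s ⊆ (convexHull ℝ s).extremePoints ℝ) {a b c : E} (ha : a ∈ s) (hb : b ∈ s)
    (hc : c ∈ s) : a = b ∨ a = c ∨ b = c := by
  have hmiddle : ∀ {x y z : E}, x ∈ s → y ∈ s → z ∈ s → Wbtw ℝ x y z → x = y ∨ z = y :=
    fun hx hy hz hxyz => (mem_extremePoints_iff_forall_segment.1 (hext hy)).2 _
      (subset_convexHull ℝ s hx) _ (subset_convexHull ℝ s hz) (mem_segment_iff_wbtw.2 hxyz)
  rcases (hcol.subset (insert_subset ha (insert_subset hb (singleton_subset_iff.2 hc))))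
    |>.wbtw_or_wbtw_or_wbtw with h | h | h
  · rcases hmiddle ha hb hc h with h | h
    exacts [Or.inl h, Or.inr (Or.inr h.symm)]
  · rcases hmiddle hb hc ha h with h | h
    exacts [Or.inr (Or.inr h), Or.inr (Or.inl h)]
  · rcases hmiddle hc ha hb h with h | h
    exacts [Or.inr (Or.inl h.symm), Or.inl h.symm]

theorem affineSpan_eq_top_of_not_collinear [FiniteDimensional ℝ E]
    (hE : Module.finrank ℝ E ≤ 2) {s : Set E} (hs : ¬ Collinear ℝ s) : affineSpan ℝ s = ⊤ := by
  have hne : s.Nonempty := nonempty_iff_ne_empty.2 fun h => hs (h ▸ collinear_empty ℝ E)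
  by_contra h
  rw [AffineSubspace.affineSpan_eq_top_iff_vectorSpan_eq_top_of_nonempty ℝ E E hne] at h
  exact hs (collinear_iff_finrank_le_one.2 (by have := Submodule.finrank_lt h; omega))

end AffineGeometry

section GeneralPosition

variable {E : Type*} [AddCommGroup E] [Module ℝ E]

def guardLines (G : Finset E) : Set (AffineSubspace ℝ E) :=
  {L | ∃ a ∈ G, ∃ b ∈ G, a ≠ b ∧ L = line[ℝ, a, b]}

structure InGeneralPosition (G : Finset E) : Prop where
  noncollinear : ∀ a ∈ G, ∀ b ∈ G, ∀ c ∈ G,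
    Collinear ℝ ({a, b, c} : Set E) → a = b ∨ a = c ∨ b = c
  ncard_lines_through_le_two : ∀ p ∉ G, {L ∈ guardLines G | p ∈ L}.ncard ≤ 2

theorem InGeneralPosition.eq_or_eq_of_mem_affineSpan_pair {G : Finset E}
    (hG : InGeneralPosition G) {a b c : E} (ha : a ∈ G) (hb : b ∈ G) (hc : c ∈ G) (hab : a ≠ b)
    (hcab : c ∈ line[ℝ, a, b]) : c = a ∨ c = b := by
  rcases hG.noncollinear c hc a ha b hb (collinear_insert_of_mem_affineSpan_pair hcab) with
    h | h | h
  exacts [Or.inl h, Or.inr h, absurd h hab]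

theorem guardLines_finite (G : Finset E) : (guardLines G).Finite := by
  refine ((G.finite_toSet.prod G.finite_toSet).image fun x => line[ℝ, x.1, x.2]).subset ?_
  rintro L ⟨a, ha, b, hb, -, rfl⟩
  exact ⟨(a, b), ⟨ha, hb⟩, rfl⟩

theorem mem_guardLines_insert [DecidableEq E] {G : Finset E} {q : E} {L : AffineSubspace ℝ E}
    (hL : L ∈ guardLines (insert q G)) : L ∈ guardLines G ∨ ∃ a ∈ G, L = line[ℝ, q, a] := by
  obtain ⟨a, ha, b, hb, hab, rfl⟩ := hL
  rw [Finset.mem_insert] at ha hb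
  rcases ha with rfl | ha
  · exact Or.inr ⟨b, hb.resolve_left (Ne.symm hab), rfl⟩
  rcases hb with rfl | hb
  · exact Or.inr ⟨a, ha, AffineSubspace.affineSpan_pair_comm⟩
  · exact Or.inl ⟨a, ha, b, hb, hab, rfl⟩

def guardCrossings (G : Finset E) : Set E :=
  {x | ∃ L₁ ∈ guardLines G, ∃ L₂ ∈ guardLines G, L₁ ≠ L₂ ∧ x ∈ L₁ ∧ x ∈ L₂}

theorem guardCrossings_finite (G : Finset E) : (guardCrossings G).Finite := by
  refine Finite.subset (s := ⋃ L₁ ∈ guardLines G, ⋃ L₂ ∈ guardLines G,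
    {x | L₁ ≠ L₂ ∧ x ∈ L₁ ∧ x ∈ L₂}) ?_ ?_
  · refine (guardLines_finite G).biUnion fun L₁ hL₁ => (guardLines_finite G).biUnion
      fun L₂ hL₂ => Subsingleton.finite ?_
    obtain ⟨a, -, b, -, -, rfl⟩ := hL₁
    obtain ⟨c, -, d, -, -, rfl⟩ := hL₂
    rintro x ⟨hne, hx₁, hx₂⟩ y ⟨-, hy₁, hy₂⟩
    by_contra hxy
    exact hne ((affineSpan_pair_eq_of_mem hxy hx₁ hy₁).symm.trans
      (affineSpan_pair_eq_of_mem hxy hx₂ hy₂))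
  · rintro x ⟨L₁, h₁, L₂, h₂, hx⟩
    simp only [mem_iUnion]
    exact ⟨L₁, h₁, L₂, h₂, hx⟩

/-- Contains every point whose addition to `G` could break general position: besides the
guard lines, the lines joining a guard to a crossing point, on which a new guard would create
a third guard line through that crossing. -/
def nonGenericLocus (G : Finset E) : Set E :=
  ⋃ a ∈ G, ⋃ x ∈ (G : Set E) ∪ guardCrossings G, (line[ℝ, a, x] : Set E)

theorem subset_nonGenericLocus (G : Finset E) : (G : Set E) ⊆ nonGenericLocus G :=
  fun a ha => mem_biUnion ha (mem_biUnion (Or.inl ha) (left_mem_affineSpan_pair ℝ a a))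

theorem InGeneralPosition.insert_of_notMem [DecidableEq E] {G : Finset E}
    (hG : InGeneralPosition G) {q : E} (hq : q ∉ nonGenericLocus G) :
    InGeneralPosition (insert q G) := by
  have hq_off : ∀ a ∈ G, ∀ x ∈ (G : Set E) ∪ guardCrossings G, q ∉ line[ℝ, a, x] :=
    fun a ha x hx h => hq (mem_biUnion (Finset.mem_coe.2 ha) (mem_biUnion hx h))
  constructor
  · intro a ha b hb c hc hcol
    by_contra! hne
    have key : ∀ x ∈ G, ∀ y ∈ G, x ≠ y → x ∈ ({a, b, c} : Set E) → y ∈ ({a, b, c} : Set E) →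
        q ∈ ({a, b, c} : Set E) → False := fun x hx y hy hxy hxm hym hqm =>
      hq_off x hx y (Or.inl hy) (hcol.mem_affineSpan_of_mem_of_ne hxm hym hqm hxy)
    rw [Finset.mem_insert] at ha hb hc
    rcases ha with rfl | ha
    · exact key b (hb.resolve_left hne.1.symm) c (hc.resolve_left hne.2.1.symm) hne.2.2
        (by simp) (by simp) (by simp)
    rcases hb with rfl | hb
    · exact key a ha c (hc.resolve_left hne.2.2.symm) hne.2.1 (by simp) (by simp) (by simp)
    rcases hc with rfl | hc
    · exact key a ha b hb hne.1 (by simp) (by simp) (by simp)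
    · exact absurd (hG.noncollinear a ha b hb c hc hcol) (by tauto)
  · intro p hp
    rw [Finset.mem_insert, not_or] at hp
    obtain ⟨hpq, hpG⟩ := hp
    have hfin := (guardLines_finite G).subset (sep_subset _ fun L => p ∈ L)
    by_cases hcross : p ∈ guardCrossings G
    · -- a new guard line through `p` would put `q` on the line through `p` and a guard
      refine (ncard_le_ncard ?_ hfin).trans (hG.ncard_lines_through_le_two p hpG)
      rintro L ⟨hL, hpL⟩
      rcases mem_guardLines_insert hL with hL | ⟨a, ha, rfl⟩
      · exact ⟨hL, hpL⟩
      · have hap : a ≠ p := fun h => hpG (h ▸ ha)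
        refine absurd ?_ (hq_off a ha p (Or.inr hcross))
        rw [affineSpan_pair_eq_of_mem hap (right_mem_affineSpan_pair ℝ q a) hpL]
        exact left_mem_affineSpan_pair ℝ q a
    · have hle_one : {L ∈ guardLines G | p ∈ L}.ncard ≤ 1 := by
        by_contra! h
        obtain ⟨L₁, L₂, h₁, h₂, hne⟩ := (one_lt_ncard_iff hfin).1 h
        exact hcross ⟨L₁, h₁.1, L₂, h₂.1, hne, h₁.2, h₂.2⟩
      have hsub : {L ∈ guardLines (insert q G) | p ∈ L} ⊆
          insert line[ℝ, q, p] {L ∈ guardLines G | p ∈ L} := by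
        rintro L ⟨hL, hpL⟩
        rcases mem_guardLines_insert hL with hL | ⟨a, -, rfl⟩
        · exact Or.inr ⟨hL, hpL⟩
        · exact Or.inl (affineSpan_pair_eq_of_mem (Ne.symm hpq)
            (left_mem_affineSpan_pair ℝ q a) hpL).symm
      have := (ncard_le_ncard hsub (hfin.insert _)).trans (ncard_insert_le _ _)
      omega

end GeneralPosition

namespace InGeneralPosition

variable {G : Finset Plane}

theorem not_hidden_of_mem (hG : InGeneralPosition G) {p : Plane} (hp : p ∈ G) {g : Plane}
    (hg : g ∈ G) : ¬ Hidden G g p := by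
  rintro ⟨b, hb, hbg, hbgp⟩
  rcases hG.eq_or_eq_of_mem_affineSpan_pair hg hb hp hbg.symm
      (mem_affineSpan_pair_of_mem_openSegment hbg.symm hbgp) with rfl | rfl
  · exact hbg (by simpa using hbgp)
  · exact hbg ((right_mem_openSegment_iff).1 hbgp).symm

/-- A hidden guard `g` determines the guard line through `g` and its blocker, which passes
through `p`; two hidden guards on one such line would have to hide each other. -/
theorem ncard_hidden_le_two (hG : InGeneralPosition G) (p : Plane) :
    {g ∈ (G : Set Plane) | Hidden G g p}.ncard ≤ 2 := by
  by_cases hp : p ∈ G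
  · have hnone : {g ∈ (G : Set Plane) | Hidden G g p} = ∅ :=
      eq_empty_of_forall_notMem fun g hg => hG.not_hidden_of_mem hp hg.1 hg.2
    rw [hnone, ncard_empty]
    exact zero_le_two
  choose! blocker hblocker_mem hblocker_ne hblocker_between using
    fun g (hg : g ∈ {g ∈ (G : Set Plane) | Hidden G g p}) => hg.2
  refine (ncard_le_ncard_of_injOn (fun g => line[ℝ, g, blocker g]) (fun g hg => ?_) ?_
    ((guardLines_finite G).subset fun L hL => hL.1)).trans (hG.ncard_lines_through_le_two p hp)
  · exact ⟨⟨g, hg.1, blocker g, hblocker_mem g hg, (hblocker_ne g hg).symm, rfl⟩,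
      mem_affineSpan_pair_of_mem_openSegment (hblocker_ne g hg).symm (hblocker_between g hg)⟩
  intro g₁ hg₁ g₂ hg₂ (hline : line[ℝ, g₁, blocker g₁] = line[ℝ, g₂, blocker g₂])
  by_contra hne
  have hg₂_on : g₂ ∈ line[ℝ, g₁, blocker g₁] :=
    hline ▸ left_mem_affineSpan_pair ℝ g₂ (blocker g₂)
  have hg₁_on : g₁ ∈ line[ℝ, g₂, blocker g₂] :=
    hline ▸ left_mem_affineSpan_pair ℝ g₁ (blocker g₁)
  have h₁ : blocker g₁ = g₂ := ((hG.eq_or_eq_of_mem_affineSpan_pair hg₁.1 (hblocker_mem g₁ hg₁)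
    hg₂.1 (hblocker_ne g₁ hg₁).symm hg₂_on).resolve_left (Ne.symm hne)).symm
  have h₂ : blocker g₂ = g₁ := ((hG.eq_or_eq_of_mem_affineSpan_pair hg₂.1 (hblocker_mem g₂ hg₂)
    hg₁.1 (hblocker_ne g₂ hg₂).symm hg₁_on).resolve_left hne).symm
  have hbetween₁ := wbtw_of_mem_openSegment (h₁ ▸ hblocker_between g₁ hg₁)
  have hbetween₂ := wbtw_of_mem_openSegment (h₂ ▸ hblocker_between g₂ hg₂)
  exact hne ((wbtw_swap_left_iff ℝ p).1 ⟨hbetween₁, hbetween₂⟩)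

theorem card_sub_two_le_ncard_visible (hG : InGeneralPosition G) (p : Plane) :
    G.card - 2 ≤ {g ∈ (G : Set Plane) | ¬ Hidden G g p}.ncard := by
  have hcover : (G : Set Plane) ⊆
      {g ∈ (G : Set Plane) | Hidden G g p} ∪ {g ∈ (G : Set Plane) | ¬ Hidden G g p} :=
    fun g hg => (em (Hidden G g p)).imp (⟨hg, ·⟩) (⟨hg, ·⟩)
  have hcard := (ncard_le_ncard hcover (G.finite_toSet.subset (union_subset
    (sep_subset _ _) (sep_subset _ _)))).trans (ncard_union_le _ _)
  rw [ncard_coe_finset] at hcard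
  have := hG.ncard_hidden_le_two p
  omega

end InGeneralPosition

section Measure

variable {E : Type*} [NormedAddCommGroup E] [NormedSpace ℝ E] [FiniteDimensional ℝ E]

theorem measure_nonGenericLocus [MeasurableSpace E] [BorelSpace E] (μ : Measure E)
    [μ.IsAddHaarMeasure] (hE : 2 ≤ Module.finrank ℝ E) (G : Finset E) :
    μ (nonGenericLocus G) = 0 :=
  (measure_biUnion_null_iff G.countable_toSet).2 fun a _ =>
    (measure_biUnion_null_iff (G.finite_toSet.union (guardCrossings_finite G)).countable).2
      fun x _ => Measure.addHaar_affineSubspace μ _ (affineSpan_pair_ne_top hE a x)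

theorem exists_inGeneralPosition_subset (hE : 2 ≤ Module.finrank ℝ E) {T : Set E}
    (hT : (interior T).Nonempty) (m : ℕ) :
    ∃ G : Finset E, G.card = m ∧ ↑G ⊆ T ∧ InGeneralPosition G := by
  classical
  let : MeasurableSpace E := borel E
  have : BorelSpace E := ⟨rfl⟩
  induction m with
  | zero =>
    refine ⟨∅, rfl, by simp, ⟨by simp, fun p _ => ?_⟩⟩
    simp [guardLines]
  | succ m ih =>
    obtain ⟨G, hcard, hGT, hG⟩ := ih
    obtain ⟨q, hqT, hq⟩ : (T \ nonGenericLocus G).Nonempty := by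
      refine nonempty_of_measure_ne_zero (μ := Measure.addHaar) ?_
      rw [measure_sdiff_null (measure_nonGenericLocus _ hE G)]
      exact (Measure.measure_pos_of_nonempty_interior _ hT).ne'
    refine ⟨insert q G, ?_, ?_, hG.insert_of_notMem hq⟩
    · rw [Finset.card_insert_of_notMem fun h => hq (subset_nonGenericLocus G h), hcard]
    · rw [Finset.coe_insert]
      exact insert_subset hqT hGT

end Measure

theorem IsConvexPolygon.interior_nonempty_s4 {n : ℕ} {V : Finset Plane} {P : Set Plane}
    (hP : IsConvexPolygon n V P) : (interior P).Nonempty := by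
  obtain ⟨hn, hcard, rfl, hext⟩ := hP
  obtain ⟨a, b, c, ha, hb, hc, hab, hac, hbc⟩ := Finset.two_lt_card_iff.1 (by omega : 2 < V.card)
  have hV : ¬ Collinear ℝ (V : Set Plane) := fun hcol => by
    rcases hcol.eq_or_eq_or_eq_of_subset_extremePoints hext ha hb hc with h | h | h
    exacts [hab h, hac h, hbc h]
  rw [interior_convexHull_nonempty_iff_affineSpan_eq_top]
  exact affineSpan_eq_top_of_not_collinear finrank_euclideanSpace_fin.le hV

theorem statement4_general (n k : ℕ) (V : Finset Plane) (P : Set Plane)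
    (hP : IsConvexPolygon n V P) :
    ∃ G : Finset Plane, ↑G ⊆ P ∧ G.card = k + 2 ∧ KCovers G P k := by
  obtain ⟨G, hcard, hGP, hG⟩ :=
    exists_inGeneralPosition_subset finrank_euclideanSpace_fin.ge hP.interior_nonempty_s4 (k + 2)
  refine ⟨G, hGP, hcard, fun p _ => ?_⟩
  simpa [hcard] using hG.card_sub_two_le_ncard_visible p

/-- For every k ≥ 1 there is a guard set of exactly k + 2 guards that
k-covers the convex n-gon P. -/
theorem statement4 (n k : ℕ) (V : Finset Plane) (P : Set Plane)
    (hP : IsConvexPolygon n V P) (hk : 1 ≤ k) :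
    ∃ G : Finset Plane, ↑G ⊆ P ∧ G.card = k + 2 ∧ KCovers G P k :=
  statement4_general n k V P hP
end
end

section
/- Let P be a convex n-gon in ℝ² and let G ⊆ P be a guard set with |G| > n. Then there exist a point x ∈ P and a guard g ∈ G such that x is hidden from g (i.e., some other guard of G lies strictly between g and x). -/
/-!
If no point is hidden, a guard `b` cannot lie in the interior of `P`: a point just beyond `b`
on the ray from another guard would be hidden. So a guard that is not a vertex lies inside an
edge `[v, w]`, which we orient so that `P` is on its left; no other guard lies on the line `vw`,
since `b` would hide `v` or `w` from it. Sending vertex guards to themselves and every other guard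
to the tail `v` of its edge is then injective: tails are not guards, and two guards with the same
tail have edges on a common line, because `P` lies to the left of both. Hence `|G| ≤ |V|`.
-/

open Set

noncomputable section

open AffineMap Filter Topology

theorem mem_openSegment_add_smul_sub {E : Type*} [AddCommGroup E] [Module ℝ E] (g b : E) {t : ℝ}
    (ht : 0 < t) : b ∈ openSegment ℝ g (b + t • (b - g)) := by
  refine ⟨t / (1 + t), 1 / (1 + t), by positivity, by positivity, by field_simp; ring, ?_⟩
  match_scalars
  · field_simp; ring
  · field_simp

theorem mem_openSegment_lineMap_or {E : Type*} [AddCommGroup E] [Module ℝ E] {v w b : E} {s : ℝ}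
    (hb : b ∈ openSegment ℝ v w) (hne : b ≠ lineMap v w s) :
    b ∈ openSegment ℝ (lineMap v w s) v ∨ b ∈ openSegment ℝ (lineMap v w s) w := by
  rw [openSegment_eq_image_lineMap] at hb
  obtain ⟨θ, ⟨hθ0, hθ1⟩, rfl⟩ := hb
  have hθs : θ ≠ s := by rintro rfl; exact hne rfl
  rcases hθs.lt_or_gt with h | h
  · left
    have hθ : θ ∈ openSegment ℝ s 0 := by
      rw [openSegment_symm, openSegment_eq_Ioo (hθ0.trans h)]; exact ⟨hθ0, h⟩
    simpa using mem_image_of_mem (lineMap v w : ℝ →ᵃ[ℝ] E) hθ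
  · right
    have hθ : θ ∈ openSegment ℝ s 1 := by
      rw [openSegment_eq_Ioo (h.trans hθ1)]; exact ⟨h, hθ1⟩
    simpa using mem_image_of_mem (lineMap v w : ℝ →ᵃ[ℝ] E) hθ

theorem exists_mem_openSegment_of_mem_convexHull {E : Type*} [AddCommGroup E] [Module ℝ E]
    [FiniteDimensional ℝ E] {s : Set E} {b : E} {f : E →ₗ[ℝ] ℝ} (hb : b ∈ convexHull ℝ s)
    (hbs : b ∉ s) (hmax : ∀ x ∈ s, f x ≤ f b) (hcol : Collinear ℝ {x | f x = f b}) :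
    ∃ v ∈ s, ∃ w ∈ s, f v = f b ∧ f w = f b ∧ b ∈ openSegment ℝ v w := by
  classical
  obtain ⟨ι, _, z, c, hzs, hind, hc0, hc1, hcz⟩ := eq_pos_convex_span_of_mem_convexHull hb
  have hlevel : ∀ i, f (z i) = f b := by
    have hsum : ∑ i, c i * (f b - f (z i)) = 0 := by
      simp only [mul_sub, Finset.sum_sub_distrib, ← Finset.sum_mul, hc1, one_mul]
      rw [← hcz, map_sum]
      simp
    intro i
    have := (Finset.sum_eq_zero_iff_of_nonneg fun j _ =>
      mul_nonneg (hc0 j).le (sub_nonneg.2 (hmax _ (hzs ⟨j, rfl⟩)))).1 hsum i (Finset.mem_univ i)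
    nlinarith [hc0 i]
  have hcard : Fintype.card ι ≤ 2 := by
    have hsub : Collinear ℝ (Set.range z) := hcol.subset (Set.range_subset_iff.2 hlevel)
    linarith [hind.card_le_finrank_succ, hsub.finrank_le_one]
  have hne0 : Fintype.card ι ≠ 0 := fun h => by
    rw [Fintype.card_eq_zero_iff] at h
    simp at hc1
  have hne1 : Fintype.card ι ≠ 1 := fun h => by
    obtain ⟨i, hi⟩ := Fintype.card_eq_one_iff.1 h
    have huniv : (Finset.univ : Finset ι) = {i} := by ext j; simp [hi j]
    rw [huniv, Finset.sum_singleton] at hc1 hcz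
    rw [← hcz, hc1, one_smul] at hbs
    exact hbs (hzs ⟨i, rfl⟩)
  obtain ⟨i, j, hij, huniv⟩ := Finset.card_eq_two.1 (show (Finset.univ : Finset ι).card = 2 by
    rw [Finset.card_univ]; omega)
  rw [huniv, Finset.sum_pair hij] at hc1 hcz
  exact ⟨z i, hzs ⟨i, rfl⟩, z j, hzs ⟨j, rfl⟩, hlevel i, hlevel j,
    c i, c j, hc0 i, hc0 j, hc1, hcz⟩

theorem exists_dual_le_of_notMem_interior {E : Type*} [NormedAddCommGroup E] [NormedSpace ℝ E]
    [FiniteDimensional ℝ E] {P : Set E} (hP : Convex ℝ P) {b : E} (hbP : b ∈ P)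
    (hb : b ∉ interior P) : ∃ f : E →ₗ[ℝ] ℝ, f ≠ 0 ∧ ∀ p ∈ P, f p ≤ f b := by
  by_cases hint : (interior P).Nonempty
  · obtain ⟨f, hf⟩ := geometric_hahn_banach_open_point hP.interior isOpen_interior hb
    obtain ⟨z, hz⟩ := hint
    refine ⟨f, fun h0 => (hf z hz).ne ?_, fun p hp => ?_⟩
    · simp [← ContinuousLinearMap.coe_coe, h0]
    have hcl : P ⊆ closure (interior P) :=
      (hP.closure_interior_eq_closure_of_nonempty_interior ⟨z, hz⟩).symm ▸ subset_closure
    exact closure_minimal (fun a ha => (hf a ha).le) (isClosed_le f.continuous continuous_const)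
      (hcl hp)
  · rw [hP.interior_nonempty_iff_affineSpan_eq_top] at hint
    have hdir : vectorSpan ℝ P < ⊤ := by
      rw [lt_top_iff_ne_top, ← direction_affineSpan]
      exact fun h => hint
        ((AffineSubspace.direction_eq_top_iff_of_nonempty ⟨b, subset_affineSpan ℝ P hbP⟩).1 h)
    obtain ⟨f, hf0, hker⟩ := (vectorSpan ℝ P).exists_le_ker_of_lt_top hdir
    refine ⟨f, hf0, fun p hp => ?_⟩
    have := hker (vsub_mem_vectorSpan ℝ hp hbP)
    rw [LinearMap.mem_ker, vsub_eq_sub, map_sub, sub_eq_zero] at this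
    exact this.le

def perpDot : Plane →ₗ[ℝ] Plane →ₗ[ℝ] ℝ :=
  LinearMap.mk₂ ℝ (fun x y => x 0 * y 1 - x 1 * y 0)
    (fun _ _ _ => by simp only [PiLp.add_apply]; ring)
    (fun _ _ _ => by simp only [PiLp.smul_apply, smul_eq_mul]; ring)
    (fun _ _ _ => by simp only [PiLp.add_apply]; ring)
    (fun _ _ _ => by simp only [PiLp.smul_apply, smul_eq_mul]; ring)

theorem perpDot_apply (x y : Plane) : perpDot x y = x 0 * y 1 - x 1 * y 0 := rfl

theorem perpDot_swap (x y : Plane) : perpDot x y = -perpDot y x := by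
  simp only [perpDot_apply]; ring

theorem exists_perpDot_eq (f : Plane →ₗ[ℝ] ℝ) : ∃ u, perpDot u = f := by
  refine ⟨!₂[f (EuclideanSpace.single 1 1), -f (EuclideanSpace.single 0 1)], ?_⟩
  refine (EuclideanSpace.basisFun (Fin 2) ℝ).toBasis.ext fun i => ?_
  fin_cases i <;> simp [perpDot_apply]

theorem exists_eq_smul_of_perpDot_eq_zero {u x : Plane} (hu : u ≠ 0) (h : perpDot u x = 0) :
    ∃ s : ℝ, x = s • u := by
  rw [perpDot_apply] at h
  by_cases h0 : u 0 = 0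
  · have h1 : u 1 ≠ 0 := fun h1 => hu (by ext i; fin_cases i <;> simp [h0, h1])
    refine ⟨x 1 / u 1, ?_⟩
    ext i; fin_cases i <;> simp [h0] at h ⊢
    · tauto
    · field_simp
  · refine ⟨x 0 / u 0, ?_⟩
    ext i; fin_cases i <;> simp <;> field_simp
    linarith

theorem collinear_setOf_perpDot_eq {u : Plane} (hu : u ≠ 0) (b : Plane) :
    Collinear ℝ {x | perpDot u x = perpDot u b} := by
  refine (collinear_iff_exists_forall_eq_smul_vadd _).2 ⟨b, u, fun x hx => ?_⟩
  obtain ⟨s, hs⟩ := exists_eq_smul_of_perpDot_eq_zero hu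
    (show perpDot u (x - b) = 0 by rw [map_sub, hx.out, sub_self])
  exact ⟨s, by rw [vadd_eq_add, ← hs, sub_add_cancel]⟩

def IsLeftSupportLine (P : Set Plane) (v w : Plane) : Prop :=
  ∀ p ∈ P, 0 ≤ perpDot (w - v) (p - v)

theorem exists_isLeftSupportLine {V : Finset Plane} {b : Plane}
    (hbP : b ∈ convexHull ℝ (V : Set Plane)) (hbi : b ∉ interior (convexHull ℝ (V : Set Plane)))
    (hbV : b ∉ V) :
    ∃ v ∈ V, ∃ w ∈ V, v ≠ w ∧ b ∈ openSegment ℝ v w ∧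
      IsLeftSupportLine (convexHull ℝ (V : Set Plane)) v w := by
  obtain ⟨f, hf0, hmax⟩ := exists_dual_le_of_notMem_interior (convex_convexHull ℝ _) hbP hbi
  obtain ⟨u, rfl⟩ := exists_perpDot_eq f
  have hu : u ≠ 0 := by rintro rfl; exact hf0 (map_zero perpDot)
  obtain ⟨v, hv, w, hw, hvb, hwb, hseg⟩ := exists_mem_openSegment_of_mem_convexHull hbP hbV
    (fun x hx => hmax x (subset_convexHull ℝ _ hx)) (collinear_setOf_perpDot_eq hu b)
  have hvw : v ≠ w := by
    rintro rfl
    rw [openSegment_same, Set.mem_singleton_iff] at hseg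
    exact hbV (hseg ▸ hv)
  obtain ⟨s, hs⟩ := exists_eq_smul_of_perpDot_eq_zero hu
    (show perpDot u (w - v) = 0 by rw [map_sub, hvb, hwb, sub_self])
  -- `w - v` is parallel to `u`, and the sign of `s` decides which orientation of the edge
  -- has `P` on its left.
  have hfwd : ∀ p, perpDot (w - v) (p - v) = s * (perpDot u p - perpDot u b) := fun p => by
    rw [hs, map_smul, LinearMap.smul_apply, map_sub, hvb, smul_eq_mul]
  have hbwd : ∀ p, perpDot (v - w) (p - w) = -s * (perpDot u p - perpDot u b) := fun p => by
    rw [← neg_sub, map_neg, LinearMap.neg_apply, hs, map_smul, LinearMap.smul_apply, map_sub, hwb,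
      smul_eq_mul, neg_mul]
  rcases le_total s 0 with hs0 | hs0
  · refine ⟨v, hv, w, hw, hvw, hseg, fun p hp => ?_⟩
    rw [hfwd]
    exact mul_nonneg_of_nonpos_of_nonpos hs0 (sub_nonpos.2 (hmax p hp))
  · refine ⟨w, hw, v, hv, hvw.symm, openSegment_symm ℝ v w ▸ hseg, fun p hp => ?_⟩
    rw [hbwd]
    exact mul_nonneg_of_nonpos_of_nonpos (neg_nonpos.2 hs0) (sub_nonpos.2 (hmax p hp))

theorem exists_hidden_of_mem_interior {P : Set Plane} {G : Finset Plane} {b g : Plane}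
    (hb : b ∈ G) (hgb : g ≠ b) (hint : b ∈ interior P) : ∃ x ∈ P, Hidden G g x := by
  have hray : Tendsto (fun t : ℝ => b + t • (b - g)) (𝓝[>] 0) (𝓝 b) := by
    have : Continuous fun t : ℝ => b + t • (b - g) := by fun_prop
    simpa using (this.tendsto 0).mono_left nhdsWithin_le_nhds
  obtain ⟨t, htP, ht⟩ :=
    ((hray.eventually (isOpen_interior.mem_nhds hint)).and self_mem_nhdsWithin).exists
  exact ⟨_, interior_subset htP, b, hb, hgb.symm, mem_openSegment_add_smul_sub g b ht⟩

theorem exists_hidden_of_isLeftSupportLine {P : Set Plane} {G : Finset Plane}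
    {v w w' b b' : Plane} (hv : v ∈ P) (hw : w ∈ P) (hw' : w' ∈ P) (hvw : v ≠ w) (hb : b ∈ G)
    (hne : b ≠ b') (hseg : b ∈ openSegment ℝ v w) (hseg' : b' ∈ openSegment ℝ v w')
    (hl : IsLeftSupportLine P v w) (hl' : IsLeftSupportLine P v w') :
    ∃ x ∈ P, Hidden G b' x := by
  have hcol : perpDot (w - v) (w' - v) = 0 :=
    le_antisymm (by rw [perpDot_swap]; exact neg_nonpos.2 (hl' w hw)) (hl w' hw')
  obtain ⟨s, hs⟩ := exists_eq_smul_of_perpDot_eq_zero (sub_ne_zero.2 hvw.symm) hcol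
  rw [openSegment_eq_image_lineMap] at hseg'
  obtain ⟨θ, -, rfl⟩ := hseg'
  have hline : lineMap v w' θ = lineMap v w (θ * s) := by
    rw [lineMap_apply_module', lineMap_apply_module', hs, mul_smul]
  rw [hline] at hne ⊢
  rcases mem_openSegment_lineMap_or hseg hne with h | h
  exacts [⟨v, hv, b, hb, hne, h⟩, ⟨w, hw, b, hb, hne, h⟩]

theorem card_le_card_of_forall_not_hidden {V G : Finset Plane}
    (hG : (G : Set Plane) ⊆ convexHull ℝ (V : Set Plane))
    (hvis : ∀ x ∈ convexHull ℝ (V : Set Plane), ∀ g ∈ G, ¬ Hidden G g x) :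
    G.card ≤ V.card := by
  set P := convexHull ℝ (V : Set Plane)
  have hVP : ∀ v ∈ V, v ∈ P := fun v hv => subset_convexHull ℝ _ hv
  rcases le_or_gt G.card 1 with hG1 | hG1
  · rcases G.eq_empty_or_nonempty with rfl | ⟨b, hb⟩
    · simp
    have hV : V.Nonempty := by
      simpa using convexHull_nonempty_iff.1 ⟨b, hG hb⟩
    exact hG1.trans hV.card_pos
  have hedge : ∀ b ∈ G, b ∉ V →
      ∃ v ∈ V, ∃ w ∈ V, v ≠ w ∧ b ∈ openSegment ℝ v w ∧ IsLeftSupportLine P v w := by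
    intro b hb hbV
    obtain ⟨g, hg, hgb⟩ := G.exists_mem_ne hG1 b
    refine exists_isLeftSupportLine (hG hb) (fun hint => ?_) hbV
    obtain ⟨x, hx, hid⟩ := exists_hidden_of_mem_interior hb hgb hint
    exact hvis x hx g hg hid
  choose! v hvV w hwV hvw hseg hleft using hedge
  -- a guard at `v b` would have `w b` hidden from it by `b`
  have hvG : ∀ b ∈ G, b ∉ V → v b ∉ G := fun b hb hbV hvb =>
    hvis _ (hVP _ (hwV b hb hbV)) _ hvb
      ⟨b, hb, fun h => hbV (h ▸ hvV b hb hbV), hseg b hb hbV⟩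
  refine Finset.card_le_card_of_injOn (fun b => if b ∈ V then b else v b) (fun b hb => ?_) ?_
  · dsimp only
    split_ifs with hbV
    exacts [hbV, hvV b hb hbV]
  intro b hb b' hb' h
  dsimp only at h
  split_ifs at h with hbV hbV' hbV'
  · exact h
  · exact absurd (h ▸ hb) (hvG b' hb' hbV')
  · exact absurd (h.symm ▸ hb') (hvG b hb hbV)
  · by_contra hne
    obtain ⟨x, hx, hid⟩ := exists_hidden_of_isLeftSupportLine (hVP _ (hvV b hb hbV))
      (hVP _ (hwV b hb hbV)) (hVP _ (hwV b' hb' hbV')) (hvw b hb hbV) hb hne (hseg b hb hbV)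
      (h ▸ hseg b' hb' hbV') (hleft b hb hbV) (h ▸ hleft b' hb' hbV')
    exact hvis x hx b' hb' hid

/-- Any placement of more than n guards in a convex n-gon creates a
point hidden from some guard (a dark point). -/
theorem statement5 (n : ℕ) (V : Finset Plane) (P : Set Plane)
    (hP : IsConvexPolygon n V P) (G : Finset Plane) (hG : ↑G ⊆ P)
    (hcard : G.card > n) :
    ∃ x ∈ P, ∃ g ∈ G, Hidden G g x := by
  obtain ⟨-, rfl, rfl, -⟩ := hP
  by_contra! hvis
  exact (card_le_card_of_forall_not_hidden hG hvis).not_gt hcard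
end
end

section
/- Let W be a wedge in ℝ² and let m be any natural number. Then there exists a guard set G ⊆ W with exactly m guards such that no point of W is hidden from three distinct guards of G; that is, every point x ∈ W is hidden from at most two guards of G. -/
open Set MeasureTheory Module
open scoped Classical

noncomputable section

def NoThreeCollinear (G : Finset Plane) : Prop :=
  ∀ p ∈ G, ∀ q ∈ G, ∀ r ∈ G, p ≠ q → p ≠ r → q ≠ r →
    ¬ Collinear ℝ ({p, q, r} : Set Plane)

def GoodConfig (G : Finset Plane) : Prop :=
  NoThreeCollinear G ∧
  ∀ x : Plane, x ∉ G →
    ∀ p₁ ∈ G, ∀ q₁ ∈ G, ∀ p₂ ∈ G, ∀ q₂ ∈ G, ∀ p₃ ∈ G, ∀ q₃ ∈ G,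
      p₁ ≠ q₁ → p₂ ≠ q₂ → p₃ ≠ q₃ →
      ({p₁, q₁} : Set Plane) ≠ {p₂, q₂} → ({p₁, q₁} : Set Plane) ≠ {p₃, q₃} →
      ({p₂, q₂} : Set Plane) ≠ {p₃, q₃} →
      Collinear ℝ ({x, p₁, q₁} : Set Plane) → Collinear ℝ ({x, p₂, q₂} : Set Plane) →
      Collinear ℝ ({x, p₃, q₃} : Set Plane) → False

lemma line_ne_top (p q : Plane) : affineSpan ℝ ({p, q} : Set Plane) ≠ ⊤ := by
  intro h
  have h1 : vectorSpan ℝ ({p, q} : Set Plane) = ⊤ := by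
    rw [← direction_affineSpan, h]; exact AffineSubspace.direction_top ℝ _ _
  rw [vectorSpan_pair] at h1
  by_cases hv : p -ᵥ q = 0
  · rw [hv] at h1; simp at h1
  · have h2 := finrank_span_singleton (K := ℝ) hv
    rw [h1, finrank_top, finrank_euclideanSpace_fin] at h2
    omega

lemma line_null (p q : Plane) :
    volume ((affineSpan ℝ ({p, q} : Set Plane) : Set Plane)) = 0 :=
  Measure.addHaar_affineSubspace _ _ (line_ne_top p q)

lemma collinear_of_openSegment {g x b : Plane} (h : b ∈ openSegment ℝ g x) :
    Collinear ℝ ({x, g, b} : Set Plane) := by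
  have hb : b ∈ affineSpan ℝ ({g, x} : Set Plane) := by
    have h1 : b ∈ segment ℝ g x := openSegment_subset_segment ℝ g x h
    rw [← convexHull_pair] at h1
    exact convexHull_subset_affineSpan _ h1
  have h2 : Collinear ℝ (insert b ({g, x} : Set Plane)) :=
    (collinear_insert_iff_of_mem_affineSpan hb).2 (collinear_pair ℝ g x)
  exact h2.subset (by intro y hy; simp only [Set.mem_insert_iff, Set.mem_singleton_iff] at hy ⊢; tauto)

lemma openSegment_antisym {a b x : Plane} (h1 : b ∈ openSegment ℝ a x)
    (h2 : a ∈ openSegment ℝ b x) : a = x := by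
  obtain ⟨s1, s2, hs1, hs2, hs, hb⟩ := h1
  obtain ⟨t1, t2, ht1, ht2, ht, ha⟩ := h2
  rw [← hb] at ha
  have key : (1 - t1 * s1) • a = (t1 * s2 + t2) • x := by
    have h3 : t1 • (s1 • a + s2 • x) + t2 • x = a := ha
    linear_combination (norm := module) (-1 : ℝ) • h3
  have hc : (1 : ℝ) - t1 * s1 = t1 * s2 + t2 := by linear_combination (-t1) * hs - ht
  rw [hc] at key
  have hpos : (0 : ℝ) < t1 * s2 + t2 := by positivity
  exact smul_right_injective Plane (ne_of_gt hpos) key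

lemma collinear_insert' {s : Set Plane} (hs : Collinear ℝ s) {p : Plane}
    (hp : p ∈ affineSpan ℝ s) : Collinear ℝ (insert p s) :=
  (collinear_insert_iff_of_mem_affineSpan hp).2 hs

lemma goodconfig_bound {G : Finset Plane} (hG : GoodConfig G) (x : Plane) :
    {g ∈ (G : Set Plane) | Hidden G g x}.ncard ≤ 2 := by
  by_contra h
  push_neg at h
  have hfin : {g ∈ (G : Set Plane) | Hidden G g x}.Finite :=
    G.finite_toSet.subset (fun g hg => hg.1)
  obtain ⟨g1, hg1, g2, hg2, g3, hg3, h12, h13, h23⟩ := (Set.two_lt_ncard hfin).mp h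
  obtain ⟨hg1G, b1, hb1G, hb1g, hb1⟩ := hg1
  obtain ⟨hg2G, b2, hb2G, hb2g, hb2⟩ := hg2
  obtain ⟨hg3G, b3, hb3G, hb3g, hb3⟩ := hg3
  have facts : ∀ g b : Plane, b ≠ g → b ∈ openSegment ℝ g x →
      g ≠ x ∧ b ≠ x ∧ Collinear ℝ ({x, g, b} : Set Plane) := by
    intro g b hbg hb
    have hgx : g ≠ x := by
      rintro rfl
      rw [openSegment_same] at hb
      exact hbg hb
    have hbx : b ≠ x := by
      rintro rfl
      exact hgx (right_mem_openSegment_iff.mp hb)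
    exact ⟨hgx, hbx, collinear_of_openSegment hb⟩
  obtain ⟨hg1x, hb1x, hc1⟩ := facts g1 b1 hb1g hb1
  obtain ⟨hg2x, hb2x, hc2⟩ := facts g2 b2 hb2g hb2
  obtain ⟨hg3x, hb3x, hc3⟩ := facts g3 b3 hb3g hb3
  by_cases hxG : x ∈ G
  · exact hG.1 x hxG g1 hg1G b1 hb1G (Ne.symm hg1x) (Ne.symm hb1x) (Ne.symm hb1g) hc1
  · have pairdist : ∀ ga ba gb bb : Plane, ga ≠ x → ga ≠ gb →
        ba ∈ openSegment ℝ ga x → bb ∈ openSegment ℝ gb x →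
        ({ga, ba} : Set Plane) ≠ ({gb, bb} : Set Plane) := by
      intro ga ba gb bb hgax hne hba hbb heq
      have h1 : ga = bb := by
        have : ga ∈ ({gb, bb} : Set Plane) := heq ▸ Set.mem_insert _ _
        rcases this with h | h
        · exact absurd h hne
        · exact h
      have h2 : gb = ba := by
        have : gb ∈ ({ga, ba} : Set Plane) := heq ▸ Set.mem_insert _ _
        rcases this with h | h
        · exact absurd h.symm hne
        · exact h
      have hba' : ba ∈ openSegment ℝ ga x := hba
      have hga' : ga ∈ openSegment ℝ ba x := by rw [← h2]; rw [h1]; exact hbb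
      exact hgax (openSegment_antisym hba' hga')
    exact hG.2 x hxG g1 hg1G b1 hb1G g2 hg2G b2 hb2G g3 hg3G b3 hb3G
      (Ne.symm hb1g) (Ne.symm hb2g) (Ne.symm hb3g)
      (pairdist g1 b1 g2 b2 hg1x h12 hb1 hb2)
      (pairdist g1 b1 g3 b3 hg1x h13 hb1 hb3)
      (pairdist g2 b2 g3 b3 hg2x h23 hb2 hb3)
      hc1 hc2 hc3

lemma pair_eq_of_collinear_four {G : Finset Plane} (hG : NoThreeCollinear G)
    {p1 q1 p2 q2 : Plane} (hp1 : p1 ∈ G) (hq1 : q1 ∈ G) (hp2 : p2 ∈ G) (hq2 : q2 ∈ G)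
    (h1 : p1 ≠ q1) (h2 : p2 ≠ q2) (hc : Collinear ℝ ({p1, q1, p2, q2} : Set Plane)) :
    ({p1, q1} : Set Plane) = {p2, q2} := by
  have hp2mem : p2 = p1 ∨ p2 = q1 := by
    by_contra hcon
    push_neg at hcon
    exact hG p1 hp1 q1 hq1 p2 hp2 h1 (Ne.symm hcon.1) (Ne.symm hcon.2)
      (hc.subset (by intro y hy; simp only [Set.mem_insert_iff, Set.mem_singleton_iff] at hy ⊢; tauto))
  have hq2mem : q2 = p1 ∨ q2 = q1 := by
    by_contra hcon
    push_neg at hcon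
    exact hG p1 hp1 q1 hq1 q2 hq2 h1 (Ne.symm hcon.1) (Ne.symm hcon.2)
      (hc.subset (by intro y hy; simp only [Set.mem_insert_iff, Set.mem_singleton_iff] at hy ⊢; tauto))
  rcases hp2mem with h | h
  · rcases hq2mem with h' | h'
    · exact absurd (h.trans h'.symm) h2
    · rw [h, h']
  · rcases hq2mem with h' | h'
    · rw [h, h']; exact Set.pair_comm p1 q1
    · exact absurd (h.trans h'.symm) h2

lemma two_lines_subsingleton {G : Finset Plane} (hG : NoThreeCollinear G)
    {p1 q1 p2 q2 : Plane} (hp1 : p1 ∈ G) (hq1 : q1 ∈ G) (hp2 : p2 ∈ G) (hq2 : q2 ∈ G)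
    (h1 : p1 ≠ q1) (h2 : p2 ≠ q2) (hne : ({p1, q1} : Set Plane) ≠ {p2, q2}) :
    {x : Plane | Collinear ℝ ({x, p1, q1} : Set Plane) ∧
      Collinear ℝ ({x, p2, q2} : Set Plane)}.Subsingleton := by
  intro x hx y hy
  by_contra hxy
  have key : ∀ p q : Plane, p ≠ q → Collinear ℝ ({x, p, q} : Set Plane) →
      Collinear ℝ ({y, p, q} : Set Plane) →
      p ∈ affineSpan ℝ ({x, y} : Set Plane) ∧ q ∈ affineSpan ℝ ({x, y} : Set Plane) := by
    intro p q hpq hcx hcy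
    have hxline : x ∈ affineSpan ℝ ({p, q} : Set Plane) :=
      hcx.mem_affineSpan_of_mem_of_ne (by simp) (by simp) (by simp) hpq
    have hyline : y ∈ affineSpan ℝ ({p, q} : Set Plane) :=
      hcy.mem_affineSpan_of_mem_of_ne (by simp) (by simp) (by simp) hpq
    have c1 : Collinear ℝ (insert y (insert x ({p, q} : Set Plane))) :=
      collinear_insert' (collinear_insert' (collinear_pair ℝ p q) hxline)
        (affineSpan_mono ℝ (Set.subset_insert _ _) hyline)
    constructor
    · exact c1.mem_affineSpan_of_mem_of_ne (by simp) (by simp) (by simp) hxy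
    · exact c1.mem_affineSpan_of_mem_of_ne (by simp) (by simp) (by simp) hxy
  obtain ⟨hp1m, hq1m⟩ := key p1 q1 h1 hx.1 hy.1
  obtain ⟨hp2m, hq2m⟩ := key p2 q2 h2 hx.2 hy.2
  have c : Collinear ℝ (insert q2 (insert p2 (insert q1 (insert p1 ({x, y} : Set Plane))))) := by
    refine collinear_insert' (collinear_insert' (collinear_insert'
      (collinear_insert' (collinear_pair ℝ x y) hp1m) ?_) ?_) ?_
    · exact affineSpan_mono ℝ (Set.subset_insert _ _) hq1m
    · exact affineSpan_mono ℝ ((Set.subset_insert _ _).trans (Set.subset_insert _ _)) hp2m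
    · exact affineSpan_mono ℝ (((Set.subset_insert _ _).trans (Set.subset_insert _ _)).trans
        (Set.subset_insert _ _)) hq2m
  exact hne (pair_eq_of_collinear_four hG hp1 hq1 hp2 hq2 h1 h2
    (c.subset (by intro z hz; simp only [Set.mem_insert_iff, Set.mem_singleton_iff] at hz ⊢; tauto)))

def Xset (G : Finset Plane) : Set Plane :=
  {x | ∃ p1 ∈ G, ∃ q1 ∈ G, ∃ p2 ∈ G, ∃ q2 ∈ G, p1 ≠ q1 ∧ p2 ≠ q2 ∧
    ({p1, q1} : Set Plane) ≠ {p2, q2} ∧ Collinear ℝ ({x, p1, q1} : Set Plane) ∧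
    Collinear ℝ ({x, p2, q2} : Set Plane)}

lemma Xset_finite {G : Finset Plane} (hG : NoThreeCollinear G) : (Xset G).Finite := by
  have hsub : Xset G ⊆ ⋃ p1 ∈ (G : Set Plane), ⋃ q1 ∈ (G : Set Plane), ⋃ p2 ∈ (G : Set Plane),
      ⋃ q2 ∈ (G : Set Plane),
      {x | p1 ≠ q1 ∧ p2 ≠ q2 ∧ ({p1, q1} : Set Plane) ≠ {p2, q2} ∧
        Collinear ℝ ({x, p1, q1} : Set Plane) ∧ Collinear ℝ ({x, p2, q2} : Set Plane)} := by
    intro x hx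
    obtain ⟨p1, hp1, q1, hq1, p2, hp2, q2, hq2, h⟩ := hx
    simp only [Set.mem_iUnion]
    exact ⟨p1, hp1, q1, hq1, p2, hp2, q2, hq2, h⟩
  refine Set.Finite.subset ?_ hsub
  refine G.finite_toSet.biUnion fun p1 hp1 => G.finite_toSet.biUnion fun q1 hq1 =>
    G.finite_toSet.biUnion fun p2 hp2 => G.finite_toSet.biUnion fun q2 hq2 => ?_
  by_cases hcond : p1 ≠ q1 ∧ p2 ≠ q2 ∧ ({p1, q1} : Set Plane) ≠ {p2, q2}
  · refine Set.Subsingleton.finite ?_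
    intro a ha b hb
    exact two_lines_subsingleton hG hp1 hq1 hp2 hq2 hcond.1 hcond.2.1 hcond.2.2
      ⟨ha.2.2.2.1, ha.2.2.2.2⟩ ⟨hb.2.2.2.1, hb.2.2.2.2⟩
  · refine Set.Finite.subset Set.finite_empty ?_
    intro z hz
    exact absurd ⟨hz.1, hz.2.1, hz.2.2.1⟩ hcond

lemma goodconfig_insert {G : Finset Plane} (hG : GoodConfig G) {p : Plane}
    (hline : ∀ q ∈ G, ∀ r ∈ G, p ∉ affineSpan ℝ ({q, r} : Set Plane))
    (hXline : ∀ x ∈ Xset G, ∀ q ∈ G, p ∉ affineSpan ℝ ({x, q} : Set Plane)) :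
    GoodConfig (insert p G) := by
  have hpG : p ∉ G := fun h => hline p h p h (subset_affineSpan ℝ _ (by simp))
  have h1 : NoThreeCollinear (insert p G) := by
    have helper : ∀ q r : Plane, q ∈ G → r ∈ G → q ≠ r →
        Collinear ℝ ({p, q, r} : Set Plane) → False := by
      intro q r hq hr hqr hcol'
      exact hline q hq r hr
        (hcol'.mem_affineSpan_of_mem_of_ne (by simp) (by simp) (by simp) hqr)
    intro a ha b hb c hc hab hac hbc hcol
    rw [Finset.mem_insert] at ha hb hc
    rcases ha with rfl | ha
    · rcases hb with rfl | hb
      · exact hab rfl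
      · rcases hc with rfl | hc
        · exact hac rfl
        · exact helper b c hb hc hbc hcol
    · rcases hb with rfl | hb
      · rcases hc with rfl | hc
        · exact hbc rfl
        · exact helper a c ha hc hac
            (hcol.subset (by intro z hz; simp only [Set.mem_insert_iff, Set.mem_singleton_iff] at hz ⊢; tauto))
      · rcases hc with rfl | hc
        · exact helper a b ha hb hab
            (hcol.subset (by intro z hz; simp only [Set.mem_insert_iff, Set.mem_singleton_iff] at hz ⊢; tauto))
        · exact hG.1 a ha b hb c hc hab hac hbc hcol
  refine ⟨h1, ?_⟩
  intro x hx p1 hp1 q1 hq1 p2 hp2 q2 hq2 p3 hp3 q3 hq3 hne1 hne2 hne3 hd12 hd13 hd23 hc1 hc2 hc3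
  have hxp : x ≠ p := fun h => hx (h ▸ Finset.mem_insert_self p G)
  have hxG : x ∉ G := fun h => hx (Finset.mem_insert_of_mem h)
  have classify : ∀ pi qi : Plane, pi ∈ insert p G → qi ∈ insert p G → pi ≠ qi →
      (pi ∈ G ∧ qi ∈ G) ∨ ∃ c, c ∈ G ∧ ({pi, qi} : Set Plane) = {p, c} := by
    intro pi qi hpi hqi hpiqi
    rw [Finset.mem_insert] at hpi hqi
    rcases hpi with rfl | hpi
    · rcases hqi with rfl | hqi
      · exact absurd rfl hpiqi
      · exact Or.inr ⟨qi, hqi, rfl⟩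
    · rcases hqi with rfl | hqi
      · exact Or.inr ⟨pi, hpi, Set.pair_comm pi qi⟩
      · exact Or.inl ⟨hpi, hqi⟩
  -- two new pairs {p,a}, {p,b}
  have helperB : ∀ a b : Plane, a ∈ G → b ∈ G → ({p, a} : Set Plane) ≠ {p, b} →
      Collinear ℝ ({x, p, a} : Set Plane) → Collinear ℝ ({x, p, b} : Set Plane) → False := by
    intro a b haG hbG hab ca cb
    have hab' : a ≠ b := fun h => hab (by rw [h])
    have hap : a ≠ p := fun h => hpG (h ▸ haG)
    have hbp : b ≠ p := fun h => hpG (h ▸ hbG)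
    have hbm : b ∈ affineSpan ℝ ({x, p} : Set Plane) :=
      cb.mem_affineSpan_of_mem_of_ne (by simp) (by simp) (by simp) hxp
    have c1 : Collinear ℝ (insert b ({x, p, a} : Set Plane)) :=
      collinear_insert' ca (affineSpan_mono ℝ
        (by intro z hz; simp only [Set.mem_insert_iff, Set.mem_singleton_iff] at hz ⊢; tauto) hbm)
    exact h1 a (Finset.mem_insert_of_mem haG) b (Finset.mem_insert_of_mem hbG) p
      (Finset.mem_insert_self p G) hab' hap hbp
      (c1.subset (by intro z hz; simp only [Set.mem_insert_iff, Set.mem_singleton_iff] at hz ⊢; tauto))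
  -- one new pair {p,c} plus x on two old lines
  have helperC : ∀ c : Plane, x ∈ Xset G → c ∈ G → Collinear ℝ ({x, p, c} : Set Plane) → False := by
    intro c hxX hcG hcol
    have hxc : x ≠ c := fun h => hxG (h ▸ hcG)
    exact hXline x hxX c hcG
      (hcol.mem_affineSpan_of_mem_of_ne (by simp) (by simp) (by simp) hxc)
  -- transfer collinearity along a pair-set equality
  have transfer : ∀ pi qi c : Plane, ({pi, qi} : Set Plane) = {p, c} →
      Collinear ℝ ({x, pi, qi} : Set Plane) → Collinear ℝ ({x, p, c} : Set Plane) := by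
    intro pi qi c hset hcol
    have : ({x, pi, qi} : Set Plane) = {x, p, c} := by
      show insert x ({pi, qi} : Set Plane) = insert x ({p, c} : Set Plane)
      rw [hset]
    rwa [this] at hcol
  rcases classify p1 q1 hp1 hq1 hne1 with ⟨hp1G, hq1G⟩ | ⟨c1, hc1G, hs1⟩
  · rcases classify p2 q2 hp2 hq2 hne2 with ⟨hp2G, hq2G⟩ | ⟨c2, hc2G, hs2⟩
    · rcases classify p3 q3 hp3 hq3 hne3 with ⟨hp3G, hq3G⟩ | ⟨c3, hc3G, hs3⟩
      · exact hG.2 x hxG p1 hp1G q1 hq1G p2 hp2G q2 hq2G p3 hp3G q3 hq3G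
          hne1 hne2 hne3 hd12 hd13 hd23 hc1 hc2 hc3
      · exact helperC c3 ⟨p1, hp1G, q1, hq1G, p2, hp2G, q2, hq2G, hne1, hne2, hd12, hc1, hc2⟩
          hc3G (transfer p3 q3 c3 hs3 hc3)
    · rcases classify p3 q3 hp3 hq3 hne3 with ⟨hp3G, hq3G⟩ | ⟨c3, hc3G, hs3⟩
      · exact helperC c2 ⟨p1, hp1G, q1, hq1G, p3, hp3G, q3, hq3G, hne1, hne3, hd13, hc1, hc3⟩
          hc2G (transfer p2 q2 c2 hs2 hc2)
      · exact helperB c2 c3 hc2G hc3G (hs2 ▸ hs3 ▸ hd23)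
          (transfer p2 q2 c2 hs2 hc2) (transfer p3 q3 c3 hs3 hc3)
  · rcases classify p2 q2 hp2 hq2 hne2 with ⟨hp2G, hq2G⟩ | ⟨c2, hc2G, hs2⟩
    · rcases classify p3 q3 hp3 hq3 hne3 with ⟨hp3G, hq3G⟩ | ⟨c3, hc3G, hs3⟩
      · exact helperC c1 ⟨p2, hp2G, q2, hq2G, p3, hp3G, q3, hq3G, hne2, hne3, hd23, hc2, hc3⟩
          hc1G (transfer p1 q1 c1 hs1 hc1)
      · exact helperB c1 c3 hc1G hc3G (hs1 ▸ hs3 ▸ hd13)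
          (transfer p1 q1 c1 hs1 hc1) (transfer p3 q3 c3 hs3 hc3)
    · exact helperB c1 c2 hc1G hc2G (hs1 ▸ hs2 ▸ hd12)
        (transfer p1 q1 c1 hs1 hc1) (transfer p2 q2 c2 hs2 hc2)

lemma exists_goodconfig (U : Set Plane) (hU : IsOpen U) (hne : U.Nonempty) (m : ℕ) :
    ∃ G : Finset Plane, ↑G ⊆ U ∧ G.card = m ∧ GoodConfig G := by
  induction m with
  | zero =>
    refine ⟨∅, by simp, rfl, ?_, ?_⟩
    · intro q hq
      exact absurd hq (Finset.notMem_empty q)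
    · intro x hx p1 hp1
      exact absurd hp1 (Finset.notMem_empty p1)
  | succ n ih =>
    obtain ⟨G, hGU, hGcard, hGgood⟩ := ih
    set N : Set Plane :=
      (⋃ q ∈ (G : Set Plane), ⋃ r ∈ (G : Set Plane),
        (affineSpan ℝ ({q, r} : Set Plane) : Set Plane)) ∪
      (⋃ x ∈ Xset G, ⋃ q ∈ (G : Set Plane),
        (affineSpan ℝ ({x, q} : Set Plane) : Set Plane)) with hNdef
    have hN : volume N = 0 := by
      refine measure_union_null ?_ ?_
      · exact (measure_biUnion_null_iff G.countable_toSet).2 fun q _ =>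
          (measure_biUnion_null_iff G.countable_toSet).2 fun r _ => line_null q r
      · exact (measure_biUnion_null_iff (Xset_finite hGgood.1).countable).2 fun x _ =>
          (measure_biUnion_null_iff G.countable_toSet).2 fun q _ => line_null x q
    have hex : ∃ p ∈ U, p ∉ N := by
      by_contra hcon
      push_neg at hcon
      exact hU.measure_ne_zero volume hne (measure_mono_null hcon hN)
    obtain ⟨p, hpU, hpN⟩ := hex
    have hline : ∀ q ∈ G, ∀ r ∈ G, p ∉ affineSpan ℝ ({q, r} : Set Plane) := by
      intro q hq r hr hmem
      exact hpN (Set.mem_union_left _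
        (Set.mem_biUnion (Finset.mem_coe.2 hq) (Set.mem_biUnion (Finset.mem_coe.2 hr) hmem)))
    have hXline : ∀ x ∈ Xset G, ∀ q ∈ G, p ∉ affineSpan ℝ ({x, q} : Set Plane) := by
      intro x hxX q hq hmem
      exact hpN (Set.mem_union_right _
        (Set.mem_biUnion hxX (Set.mem_biUnion (Finset.mem_coe.2 hq) hmem)))
    have hpG : p ∉ G := fun h => hline p h p h (subset_affineSpan ℝ _ (by simp))
    refine ⟨insert p G, ?_, ?_, goodconfig_insert hGgood hline hXline⟩
    · rw [Finset.coe_insert]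
      exact Set.insert_subset hpU hGU
    · rw [Finset.card_insert_of_notMem hpG, hGcard]

lemma wedge_open_subset {a u v : Plane} (h : LinearIndependent ℝ ![u, v]) :
    ∃ U : Set Plane, IsOpen U ∧ U.Nonempty ∧
      U ⊆ {x | ∃ s t : ℝ, 0 ≤ s ∧ 0 ≤ t ∧ x = a + s • u + t • v} := by
  have hcard : Fintype.card (Fin 2) = finrank ℝ Plane := by
    rw [finrank_euclideanSpace_fin]; rfl
  let B : Basis (Fin 2) ℝ Plane := basisOfLinearIndependentOfCardEqFinrank h hcard
  have hB : ⇑B = ![u, v] := coe_basisOfLinearIndependentOfCardEqFinrank h hcard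
  let f : Fin 2 → Plane → ℝ := fun i x => B.repr (x - a) i
  have hfc : ∀ i, Continuous (f i) := by
    intro i
    have h1 : Continuous (B.coord i) := (B.coord i).continuous_of_finiteDimensional
    have h2 : Continuous (fun x : Plane => x - a) := continuous_id.sub continuous_const
    have : f i = fun x => B.coord i (x - a) := by
      funext x; simp [f, Basis.coord_apply]
    rw [this]
    exact h1.comp h2
  refine ⟨{x | 0 < f 0 x} ∩ {x | 0 < f 1 x}, ?_, ?_, ?_⟩
  · exact ((isOpen_Ioi.preimage (hfc 0)).inter (isOpen_Ioi.preimage (hfc 1)))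
  · refine ⟨a + (u + v), ?_, ?_⟩
    · show (0 : ℝ) < B.repr (a + (u + v) - a) 0
      have : a + (u + v) - a = B 0 + B 1 := by
        rw [hB]; simp [Matrix.cons_val_zero, Matrix.cons_val_one]
      rw [this, map_add]
      simp [Basis.repr_self]
    · show (0 : ℝ) < B.repr (a + (u + v) - a) 1
      have : a + (u + v) - a = B 0 + B 1 := by
        rw [hB]; simp [Matrix.cons_val_zero, Matrix.cons_val_one]
      rw [this, map_add]
      simp [Basis.repr_self]
  · rintro x ⟨h0, h1⟩
    refine ⟨f 0 x, f 1 x, le_of_lt h0, le_of_lt h1, ?_⟩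
    have hsum : (f 0 x) • B 0 + (f 1 x) • B 1 = x - a := by
      have := B.sum_repr (x - a)
      rwa [Fin.sum_univ_two] at this
    rw [hB] at hsum
    simp only [Matrix.cons_val_zero, Matrix.cons_val_one, Matrix.head_cons] at hsum
    rw [add_assoc, hsum]
    abel

/-- For any m, one can place exactly m guards in a wedge W so that
every point of W is hidden from at most two guards. -/
theorem statement9 (m : ℕ) (W : Set Plane) (hW : IsWedge W) :
    ∃ G : Finset Plane, ↑G ⊆ W ∧ G.card = m ∧
      ∀ x ∈ W, {g ∈ (G : Set Plane) | Hidden G g x}.ncard ≤ 2 := by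
  obtain ⟨a, u, v, hli, hWeq⟩ := hW
  obtain ⟨U, hUopen, hUne, hUsub⟩ := wedge_open_subset (a := a) hli
  obtain ⟨G, hGU, hGcard, hGgood⟩ := exists_goodconfig U hUopen hUne m
  refine ⟨G, ?_, hGcard, fun x _ => goodconfig_bound hGgood x⟩
  rw [hWeq]
  exact hGU.trans hUsub
end
end

section
/- Let P be a convex n-gon in ℝ² and let G ⊆ P be a guard set such that no point of P is hidden from two distinct guards of G. Let g1, g2, g3 ∈ G be affinely independent and let T = convexHull ℝ {g1, g2, g3} (a closed triangle contained in P). Then T contains at most 5 guards of G, i.e. |G ∩ T| ≤ 5. Moreover, if |G ∩ T| = 5, then after relabeling g1, g2, g3 if necessary, the two guards g4, g5 ∈ (G ∩ T) \ {g1, g2, g3} satisfy: g4 lies in the open segment from g1 to g3, g5 lies in the open segment from g2 to g4, and the closed segment from g1 to g3 is contained in the frontier of P (so that g1 and g3 are extreme points of P and g1 g3 is an edge of P). -/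
open Set

noncomputable section

/-!
Every guard of the triangle other than its corners lies on an open edge or in the open triangle,
and no two extra guards can be of the same kind. Two edge guards would hide a corner twice: on a
common edge its far endpoint, from the near endpoint and from the nearer guard; on two edges their
common corner, from the two other corners. Two interior guards either lie on one cevian, whose
foot is then hidden twice along it, or the cevians through them from two suitable corners cross
at a point of the triangle hidden from both corners.

An edge guard `e` and an interior guard `f` are aligned with the opposite corner `b`, since
otherwise the foot of the cevian from `b` through `f` is hidden from `b` and from an endpoint of
the edge. If that edge left the frontier of `P`, then `e` would be interior to `P`, and a point
of `P` just beyond `e` on the ray from `b` would be hidden from `b` by `f` and from `f` by `e`.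
-/

section Segment

variable {E : Type*} [AddCommGroup E] [Module ℝ E] {x y z m : E}

theorem sbtw_iff_mem_openSegment : Sbtw ℝ x y z ↔ y ∈ openSegment ℝ x z ∧ x ≠ z := by
  rw [openSegment_eq_image_lineMap, sbtw_iff_mem_image_Ioo_and_ne]

theorem Sbtw.mem_openSegment (h : Sbtw ℝ x y z) : y ∈ openSegment ℝ x z :=
  (sbtw_iff_mem_openSegment.1 h).1

theorem sbtw_of_mem_openSegment (h : y ∈ openSegment ℝ x z) (hyx : y ≠ x) : Sbtw ℝ x y z := by
  refine sbtw_iff_mem_openSegment.2 ⟨h, ?_⟩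
  rintro rfl
  rw [openSegment_same] at h
  exact hyx h

theorem Sbtw.eq_or_sbtw_or_sbtw (hy : Sbtw ℝ x y z) (hm : Wbtw ℝ x m z) :
    y = m ∨ Sbtw ℝ x y m ∨ Sbtw ℝ m y z := by
  obtain rfl | hym := eq_or_ne y m
  · exact .inl rfl
  obtain ⟨s, hs, rfl⟩ := hy.wbtw
  obtain ⟨t, ht, rfl⟩ := hm
  rw [AffineMap.lineMap_apply, AffineMap.lineMap_apply] at *
  rcases wbtw_or_wbtw_smul_vadd_of_nonneg x (z -ᵥ x) hs.1 ht.1 with h | h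
  · exact .inr (.inl ⟨h, hy.ne_left, hym⟩)
  · exact .inr (.inr ⟨hy.wbtw.trans_left_right h, hym, hy.ne_right⟩)

end Segment

section Counting

variable {α : Type*} {s A B : Set α}

theorem Set.ncard_le_two_of_subset_union (hs : s ⊆ A ∪ B) (hA : (s ∩ A).Subsingleton)
    (hB : (s ∩ B).Subsingleton) : s.ncard ≤ 2 :=
  calc s.ncard = ((s ∩ A) ∪ (s ∩ B)).ncard := by
        rw [← inter_union_distrib_left, inter_eq_self_of_subset_left hs]
    _ ≤ (s ∩ A).ncard + (s ∩ B).ncard := ncard_union_le _ _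
    _ ≤ 1 + 1 := add_le_add ((ncard_le_one hA.finite).2 fun _ ha _ hb => hA ha hb)
        ((ncard_le_one hB.finite).2 fun _ ha _ hb => hB ha hb)

theorem Set.exists_eq_pair_of_subset_union (hs : s ⊆ A ∪ B) (hA : (s ∩ A).Subsingleton)
    (hB : (s ∩ B).Subsingleton) (h2 : s.ncard = 2) : ∃ a ∈ A, ∃ b ∈ B, a ≠ b ∧ s = {a, b} := by
  obtain ⟨x, y, hxy, rfl⟩ := ncard_eq_two.1 h2
  have hx : x ∈ ({x, y} : Set α) := mem_insert x {y}
  have hy : y ∈ ({x, y} : Set α) := mem_insert_of_mem x rfl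
  rcases hs hx with hxA | hxB <;> rcases hs hy with hyA | hyB
  · exact absurd (hA ⟨hx, hxA⟩ ⟨hy, hyA⟩) hxy
  · exact ⟨x, hxA, y, hyB, hxy, rfl⟩
  · exact ⟨y, hyA, x, hxB, hxy.symm, pair_comm x y⟩
  · exact absurd (hB ⟨hx, hxB⟩ ⟨hy, hyB⟩) hxy

end Counting

section Triangle

variable {E : Type*} [AddCommGroup E] [Module ℝ E] {X Y Z x : E}

theorem mem_convexHull_triple :
    x ∈ convexHull ℝ {X, Y, Z} ↔ ∃ a b c : ℝ, 0 ≤ a ∧ 0 ≤ b ∧ 0 ≤ c ∧ a + b + c = 1 ∧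
      a • X + b • Y + c • Z = x := by
  constructor
  · rw [convexHull_insert (insert_nonempty _ _), convexHull_pair, convexJoin_singleton_left]
    simp only [mem_iUnion₂]
    rintro ⟨q, ⟨c, d, hc, hd, hcd, rfl⟩, s, t, hs, ht, hst, rfl⟩
    exact ⟨s, t * c, t * d, hs, by positivity, by positivity, by linear_combination t * hcd + hst,
      by module⟩
  · rintro ⟨a, b, c, ha, hb, hc, habc, rfl⟩
    refine mem_convexHull_of_exists_fintype ![a, b, c] ![X, Y, Z] ?_ ?_ ?_ ?_ <;>
      simp [Fin.forall_fin_succ, Fin.sum_univ_three, *, add_assoc]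

def openTriangle (X Y Z : E) : Set E :=
  {x | ∃ a b c : ℝ, 0 < a ∧ 0 < b ∧ 0 < c ∧ a + b + c = 1 ∧ a • X + b • Y + c • Z = x}

theorem openTriangle_swap_left : openTriangle Y X Z = openTriangle X Y Z := by
  ext x
  constructor <;> rintro ⟨a, b, c, ha, hb, hc, habc, rfl⟩ <;>
    exact ⟨b, a, c, hb, ha, hc, by linarith, by abel⟩

theorem openTriangle_swap_right : openTriangle X Z Y = openTriangle X Y Z := by
  ext x
  constructor <;> rintro ⟨a, b, c, ha, hb, hc, habc, rfl⟩ <;>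
    exact ⟨a, c, b, ha, hc, hb, by linarith, by abel⟩

theorem sbtw_or_mem_openTriangle_of_mem_convexHull (hx : x ∈ convexHull ℝ {X, Y, Z})
    (hxX : x ≠ X) (hxY : x ≠ Y) (hxZ : x ≠ Z) :
    (Sbtw ℝ X x Y ∨ Sbtw ℝ X x Z ∨ Sbtw ℝ Y x Z) ∨ x ∈ openTriangle X Y Z := by
  obtain ⟨a, b, c, ha, hb, hc, habc, rfl⟩ := mem_convexHull_triple.1 hx
  rcases ha.eq_or_lt with rfl | ha
  · refine .inl (.inr (.inr (sbtw_of_mem_openSegment ?_ hxY)))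
    exact mem_openSegment_of_ne_left_right hxY.symm hxZ.symm ⟨b, c, hb, hc, by linarith, by simp⟩
  rcases hb.eq_or_lt with rfl | hb
  · refine .inl (.inr (.inl (sbtw_of_mem_openSegment ?_ hxX)))
    exact mem_openSegment_of_ne_left_right hxX.symm hxZ.symm ⟨a, c, ha.le, hc, by linarith, by simp⟩
  rcases hc.eq_or_lt with rfl | hc
  · refine .inl (.inl (sbtw_of_mem_openSegment ?_ hxX))
    exact mem_openSegment_of_ne_left_right hxX.symm hxY.symm
      ⟨a, b, ha.le, hb.le, by linarith, by simp⟩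
  exact .inr ⟨a, b, c, ha, hb, hc, habc, rfl⟩

theorem smul_add_smul_add_smul_mem_openSegment {a b c : ℝ} (ha : 0 < a) (hb : 0 < b) (hc : 0 < c)
    (habc : a + b + c = 1) (X Y Z : E) :
    a • X + b • Y + c • Z ∈ openSegment ℝ X ((b / (b + c)) • Y + (c / (b + c)) • Z) := by
  refine ⟨a, b + c, ha, by positivity, by linarith, ?_⟩
  rw [smul_add, smul_smul, smul_smul, mul_div_cancel₀ _ (by positivity),
    mul_div_cancel₀ _ (by positivity), add_assoc]

theorem exists_mem_convexHull_mem_openSegment_mem_openSegment {p₁ p₂ p₃ q₁ q₂ q₃ : ℝ}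
    (hp₂ : 0 < p₂) (hp₃ : 0 < p₃) (hp : p₁ + p₂ + p₃ = 1)
    (hq₁ : 0 < q₁) (hq₂ : 0 < q₂) (hq : q₁ + q₂ + q₃ = 1)
    (h₁ : p₂ * q₁ < p₁ * q₂) (h₂ : p₃ * q₂ < p₂ * q₃) :
    ∃ y ∈ convexHull ℝ {X, Y, Z}, p₁ • X + p₂ • Y + p₃ • Z ∈ openSegment ℝ X y ∧
      q₁ • X + q₂ • Y + q₃ • Z ∈ openSegment ℝ Z y := by
  -- `y` is where the ray from `X` through the first point meets the ray from `Z` through the second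
  set D := q₂ * (p₂ + p₃) + p₂ * q₁
  have hD : 0 < D := by positivity
  refine ⟨(p₂ * q₁ / D) • X + (q₂ * p₂ / D) • Y + (q₂ * p₃ / D) • Z,
    mem_convexHull_triple.2 ⟨_, _, _, by positivity, by positivity, by positivity,
      by field_simp; ring, rfl⟩, ?_, ?_⟩
  · refine mem_openSegment_iff_div.2 ⟨q₂ - D, D, by nlinarith, hD, ?_⟩
    rw [sub_add_cancel]
    match_scalars <;> field_simp
    linear_combination (-q₂) * hp
  · refine mem_openSegment_iff_div.2 ⟨p₂ - D, D, by nlinarith, hD, ?_⟩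
    rw [sub_add_cancel]
    match_scalars <;> field_simp
    linear_combination (-p₂) * hq

end Triangle

section Interior

variable {E : Type*} [TopologicalSpace E] [AddCommGroup E] [IsTopologicalAddGroup E] [Module ℝ E]
  [ContinuousSMul ℝ E] {s : Set E} {b e : E}

theorem exists_sbtw_of_mem_interior (hbe : b ≠ e) (he : e ∈ interior s) :
    ∃ x ∈ s, Sbtw ℝ b e x := by
  have hnhds : ∀ᶠ t in nhds (1 : ℝ), AffineMap.lineMap b e t ∈ s :=
    AffineMap.lineMap_continuous.continuousAt.preimage_mem_nhds
      (by simpa using mem_interior_iff_mem_nhds.1 he)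
  obtain ⟨t, hts, ht⟩ := ((hnhds.filter_mono nhdsWithin_le_nhds).and
    (self_mem_nhdsWithin : Ioi (1 : ℝ) ∈ nhdsWithin 1 (Ioi 1))).exists
  exact ⟨_, hts, sbtw_iff_left_ne_and_right_mem_image_Ioi.2 ⟨hbe, t, ht, rfl⟩⟩

end Interior

def NoPointHiddenTwice (G : Finset Plane) (P : Set Plane) : Prop :=
  ∀ x ∈ P, ∀ g ∈ G, ∀ g' ∈ G, Hidden G g x → Hidden G g' x → g = g'

theorem Hidden.of_sbtw {G : Finset Plane} {g b x : Plane} (hb : b ∈ G) (h : Sbtw ℝ g b x) :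
    Hidden G g x :=
  ⟨b, hb, h.ne_left, h.mem_openSegment⟩

namespace NoPointHiddenTwice

variable {G : Finset Plane} {P : Set Plane} {X Y Z e f : Plane}

theorem eq_of_sbtw (hG : NoPointHiddenTwice G P) {x g g' b b' : Plane} (hx : x ∈ P)
    (hg : g ∈ G) (hg' : g' ∈ G) (hb : b ∈ G) (hb' : b' ∈ G) (h : Sbtw ℝ g b x)
    (h' : Sbtw ℝ g' b' x) : g = g' :=
  hG x hx g hg g' hg' (.of_sbtw hb h) (.of_sbtw hb' h')

theorem not_sbtw_of_sbtw (hG : NoPointHiddenTwice G P) {u v w x : Plane} (hx : x ∈ P)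
    (hu : u ∈ G) (hv : v ∈ G) (hw : w ∈ G) (h₁ : Sbtw ℝ u v w) : ¬Sbtw ℝ u w x := fun h₂ =>
  h₁.left_ne (hG.eq_of_sbtw hx hu hv hv hw (h₂.trans_left h₁) (h₂.trans_left_right h₁))

theorem eq_of_sbtw_of_sbtw (hG : NoPointHiddenTwice G P) {v e f c : Plane} (hc : c ∈ P)
    (hv : v ∈ G) (he : e ∈ G) (hf : f ∈ G) (h : Sbtw ℝ v e c) (h' : Sbtw ℝ v f c) : e = f := by
  rcases h.eq_or_sbtw_or_sbtw h'.wbtw with hef | hvef | hfec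
  · exact hef
  · exact absurd h' (hG.not_sbtw_of_sbtw hc hv he hf hvef)
  · exact absurd h (hG.not_sbtw_of_sbtw hc hv hf he (h'.trans_right_left hfec))

theorem eq_of_sbtw_of_sbtw_of_subset (hG : NoPointHiddenTwice G P) (hGP : ↑G ⊆ P)
    {v e f c c' : Plane} (hv : v ∈ G) (he : e ∈ G) (hf : f ∈ G) (hc : c ∈ G) (hc' : c' ∈ G)
    (h : Sbtw ℝ v e c) (h' : Sbtw ℝ v f c') : e = f := by
  obtain rfl | hcc' := eq_or_ne c c'
  · exact hG.eq_of_sbtw_of_sbtw (hGP hc) hv he hf h h'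
  · exact absurd (hG.eq_of_sbtw (hGP hv) hc hc' he hf h.symm h'.symm) hcc'

theorem segment_subset_frontier (hG : NoPointHiddenTwice G P) (hP : Convex ℝ P)
    {a b c e f : Plane} (ha : a ∈ P) (hc : c ∈ P) (hb : b ∈ G) (he : e ∈ G) (hf : f ∈ G)
    (hace : Sbtw ℝ a e c) (hbfe : Sbtw ℝ b f e) : segment ℝ a c ⊆ frontier P := by
  intro z hz
  refine ⟨subset_closure (hP.segment_subset ha hc hz), fun hzP => ?_⟩
  have heP : e ∈ interior P := by
    rcases hace.eq_or_sbtw_or_sbtw (mem_segment_iff_wbtw.1 hz) with rfl | haez | hzec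
    · exact hzP
    · exact hP.openSegment_interior_self_subset_interior hzP ha haez.symm.mem_openSegment
    · exact hP.openSegment_interior_self_subset_interior hzP hc hzec.mem_openSegment
  obtain ⟨x, hxP, hbex⟩ := exists_sbtw_of_mem_interior hbfe.left_ne_right heP
  exact hG.not_sbtw_of_sbtw hxP hb hf he hbfe hbex

theorem eq_of_sbtw_edges (hG : NoPointHiddenTwice G P) (hGP : ↑G ⊆ P) (hX : X ∈ G)
    (hY : Y ∈ G) (hZ : Z ∈ G) (he : e ∈ G) (hf : f ∈ G)
    (heE : Sbtw ℝ X e Y ∨ Sbtw ℝ X e Z ∨ Sbtw ℝ Y e Z)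
    (hfE : Sbtw ℝ X f Y ∨ Sbtw ℝ X f Z ∨ Sbtw ℝ Y f Z) : e = f := by
  rcases heE with h | h | h <;> rcases hfE with h' | h' | h'
  · exact hG.eq_of_sbtw_of_sbtw_of_subset hGP hX he hf hY hY h h'
  · exact hG.eq_of_sbtw_of_sbtw_of_subset hGP hX he hf hY hZ h h'
  · exact hG.eq_of_sbtw_of_sbtw_of_subset hGP hY he hf hX hZ h.symm h'
  · exact hG.eq_of_sbtw_of_sbtw_of_subset hGP hX he hf hZ hY h h'
  · exact hG.eq_of_sbtw_of_sbtw_of_subset hGP hX he hf hZ hZ h h'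
  · exact hG.eq_of_sbtw_of_sbtw_of_subset hGP hZ he hf hX hY h.symm h'.symm
  · exact hG.eq_of_sbtw_of_sbtw_of_subset hGP hY he hf hZ hX h h'.symm
  · exact hG.eq_of_sbtw_of_sbtw_of_subset hGP hZ he hf hY hX h.symm h'.symm
  · exact hG.eq_of_sbtw_of_sbtw_of_subset hGP hY he hf hZ hZ h h'

theorem sbtw_of_sbtw_of_mem_openTriangle (hG : NoPointHiddenTwice G P)
    (hT : convexHull ℝ {X, Y, Z} ⊆ P) (hX : X ∈ G) (hY : Y ∈ G) (hZ : Z ∈ G) (he : e ∈ G)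
    (hf : f ∈ G) (hXY : X ≠ Y) (hYZ : Y ≠ Z) (hfY : f ≠ Y) (hXeZ : Sbtw ℝ X e Z)
    (hfT : f ∈ openTriangle X Y Z) : Sbtw ℝ Y f e := by
  obtain ⟨a, b, c, ha, hb, hc, habc, rfl⟩ := hfT
  set m := (a / (a + c)) • X + (c / (a + c)) • Z
  have hYfm : Sbtw ℝ Y (a • X + b • Y + c • Z) m := by
    refine sbtw_of_mem_openSegment ?_ hfY
    convert smul_add_smul_add_smul_mem_openSegment hb ha hc (by linarith) Y X Z using 1
    abel
  have hXmZ : Wbtw ℝ X m Z :=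
    mem_segment_iff_wbtw.1 ⟨_, _, by positivity, by positivity, by field_simp, rfl⟩
  have hmP : m ∈ P := hT (segment_subset_convexHull (by simp) (by simp) hXmZ.mem_segment)
  rcases hXeZ.eq_or_sbtw_or_sbtw hXmZ with rfl | hXem | hmeZ
  · exact hYfm
  · exact absurd (hG.eq_of_sbtw hmP hX hY he hf hXem hYfm) hXY
  · exact absurd (hG.eq_of_sbtw hmP hZ hY he hf hmeZ.symm hYfm) hYZ.symm

theorem eq_of_same_cevian (hG : NoPointHiddenTwice G P) (hT : convexHull ℝ {X, Y, Z} ⊆ P)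
    (hX : X ∈ G) (he : e ∈ G) (hf : f ∈ G) (heX : e ≠ X) (hfX : f ≠ X)
    {p₁ p₂ p₃ q₁ q₂ q₃ : ℝ} (hp₁ : 0 < p₁) (hp₂ : 0 < p₂) (hp₃ : 0 < p₃) (hp : p₁ + p₂ + p₃ = 1)
    (hq₁ : 0 < q₁) (hq₂ : 0 < q₂) (hq₃ : 0 < q₃) (hq : q₁ + q₂ + q₃ = 1)
    (hpe : p₁ • X + p₂ • Y + p₃ • Z = e) (hqf : q₁ • X + q₂ • Y + q₃ • Z = f)
    (hpq : p₂ * q₃ = p₃ * q₂) : e = f := by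
  -- both points lie on the same cevian from `X`
  have hfoot : q₂ / (q₂ + q₃) = p₂ / (p₂ + p₃) ∧ q₃ / (q₂ + q₃) = p₃ / (p₂ + p₃) := by
    constructor <;> field_simp <;> linarith
  have hmP : (p₂ / (p₂ + p₃)) • Y + (p₃ / (p₂ + p₃)) • Z ∈ P :=
    hT (segment_subset_convexHull (by simp) (by simp)
      ⟨_, _, by positivity, by positivity, by field_simp, rfl⟩)
  have hXem := smul_add_smul_add_smul_mem_openSegment hp₁ hp₂ hp₃ hp X Y Z
  have hXfm := smul_add_smul_add_smul_mem_openSegment hq₁ hq₂ hq₃ hq X Y Z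
  rw [hfoot.1, hfoot.2] at hXfm
  subst hpe hqf
  exact hG.eq_of_sbtw_of_sbtw hmP hX he hf (sbtw_of_mem_openSegment hXem heX)
    (sbtw_of_mem_openSegment hXfm hfX)

theorem false_of_cevians_cross (hG : NoPointHiddenTwice G P) (hT : convexHull ℝ {X, Y, Z} ⊆ P)
    (hX : X ∈ G) (hZ : Z ∈ G) (he : e ∈ G) (hf : f ∈ G) (hXZ : X ≠ Z)
    (heX : e ≠ X) (heZ : e ≠ Z) (hfX : f ≠ X) (hfZ : f ≠ Z)
    {p₁ p₂ p₃ q₁ q₂ q₃ : ℝ} (hp₁ : 0 < p₁) (hp₂ : 0 < p₂) (hp₃ : 0 < p₃) (hp : p₁ + p₂ + p₃ = 1)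
    (hq₁ : 0 < q₁) (hq₂ : 0 < q₂) (hq₃ : 0 < q₃) (hq : q₁ + q₂ + q₃ = 1)
    (hpe : p₁ • X + p₂ • Y + p₃ • Z = e) (hqf : q₁ • X + q₂ • Y + q₃ • Z = f)
    (hpq : 0 < (p₁ * q₂ - p₂ * q₁) * (p₂ * q₃ - p₃ * q₂)) : False := by
  subst hpe hqf
  rcases mul_pos_iff.1 hpq with ⟨h₁, h₂⟩ | ⟨h₁, h₂⟩
  · obtain ⟨y, hy, hey, hfy⟩ := exists_mem_convexHull_mem_openSegment_mem_openSegment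
      (X := X) (Y := Y) (Z := Z) hp₂ hp₃ hp hq₁ hq₂ hq (by linarith) (by linarith)
    exact hXZ (hG.eq_of_sbtw (hT hy) hX hZ he hf (sbtw_of_mem_openSegment hey heX)
      (sbtw_of_mem_openSegment hfy hfZ))
  · obtain ⟨y, hy, hfy, hey⟩ := exists_mem_convexHull_mem_openSegment_mem_openSegment
      (X := X) (Y := Y) (Z := Z) hq₂ hq₃ hq hp₁ hp₂ hp (by linarith) (by linarith)
    exact hXZ (hG.eq_of_sbtw (hT hy) hX hZ hf he (sbtw_of_mem_openSegment hfy hfX)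
      (sbtw_of_mem_openSegment hey heZ))

theorem eq_of_mem_openTriangle (hG : NoPointHiddenTwice G P) (hT : convexHull ℝ {X, Y, Z} ⊆ P)
    (hV : {X, Y, Z} ⊆ (G : Set Plane)) (hXY : X ≠ Y) (hYZ : Y ≠ Z) (hXZ : X ≠ Z) (he : e ∈ G)
    (hf : f ∈ G) (heV : e ∉ ({X, Y, Z} : Set Plane)) (hfV : f ∉ ({X, Y, Z} : Set Plane))
    (heT : e ∈ openTriangle X Y Z) (hfT : f ∈ openTriangle X Y Z) : e = f := by
  obtain ⟨p₁, p₂, p₃, hp₁, hp₂, hp₃, hp, hpe⟩ := heT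
  obtain ⟨q₁, q₂, q₃, hq₁, hq₂, hq₃, hq, hqf⟩ := hfT
  simp only [insert_subset_iff, singleton_subset_iff, Finset.mem_coe] at hV
  simp only [mem_insert_iff, mem_singleton_iff, not_or] at heV hfV
  obtain ⟨hX, hY, hZ⟩ := hV
  obtain ⟨heX, heY, heZ⟩ := heV
  obtain ⟨hfX, hfY, hfZ⟩ := hfV
  have hT₁ : convexHull ℝ {Y, Z, X} ⊆ P := by rwa [pair_comm Z X, insert_comm]
  have hT₂ : convexHull ℝ {Z, X, Y} ⊆ P := by rwa [insert_comm Z, pair_comm Z Y]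
  have hpe₁ : p₂ • Y + p₃ • Z + p₁ • X = e := by rw [← hpe]; abel
  have hqf₁ : q₂ • Y + q₃ • Z + q₁ • X = f := by rw [← hqf]; abel
  have hpe₂ : p₃ • Z + p₁ • X + p₂ • Y = e := by rw [← hpe]; abel
  have hqf₂ : q₃ • Z + q₁ • X + q₂ • Y = f := by rw [← hqf]; abel
  by_contra hef
  have hA : p₂ * q₃ ≠ p₃ * q₂ := fun h => hef <|
    hG.eq_of_same_cevian hT hX he hf heX hfX hp₁ hp₂ hp₃ hp hq₁ hq₂ hq₃ hq hpe hqf h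
  have hB : p₃ * q₁ ≠ p₁ * q₃ := fun h => hef <| hG.eq_of_same_cevian hT₁ hY he hf heY hfY
    hp₂ hp₃ hp₁ (by linarith) hq₂ hq₃ hq₁ (by linarith) hpe₁ hqf₁ h
  have hC : p₁ * q₂ ≠ p₂ * q₁ := fun h => hef <| hG.eq_of_same_cevian hT₂ hZ he hf heZ hfZ
    hp₃ hp₁ hp₂ (by linarith) hq₃ hq₁ hq₂ (by linarith) hpe₂ hqf₂ h
  have cross₀ := hG.false_of_cevians_cross hT hX hZ he hf hXZ heX heZ hfX hfZ
    hp₁ hp₂ hp₃ hp hq₁ hq₂ hq₃ hq hpe hqf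
  have cross₁ := hG.false_of_cevians_cross hT₁ hY hX he hf hXY.symm heY heX hfY hfX
    hp₂ hp₃ hp₁ (by linarith) hq₂ hq₃ hq₁ (by linarith) hpe₁ hqf₁
  have cross₂ := hG.false_of_cevians_cross hT₂ hZ hY he hf hYZ.symm heZ heY hfZ hfY
    hp₃ hp₁ hp₂ (by linarith) hq₃ hq₁ hq₂ (by linarith) hpe₂ hqf₂
  -- of three nonzero reals, two have the same sign
  rcases hA.lt_or_gt with hA | hA <;> rcases hB.lt_or_gt with hB | hB <;>
    rcases hC.lt_or_gt with hC | hC <;>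
    first
    | exact cross₀ (mul_pos (by linarith) (by linarith))
    | exact cross₀ (mul_pos_of_neg_of_neg (by linarith) (by linarith))
    | exact cross₁ (mul_pos (by linarith) (by linarith))
    | exact cross₁ (mul_pos_of_neg_of_neg (by linarith) (by linarith))
    | exact cross₂ (mul_pos (by linarith) (by linarith))
    | exact cross₂ (mul_pos_of_neg_of_neg (by linarith) (by linarith))

theorem exists_labeling (hG : NoPointHiddenTwice G P) (hT : convexHull ℝ {X, Y, Z} ⊆ P)
    (hV : {X, Y, Z} ⊆ (G : Set Plane)) (hXY : X ≠ Y) (hYZ : Y ≠ Z) (hXZ : X ≠ Z) (he : e ∈ G)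
    (hf : f ∈ G) (hfV : f ∉ ({X, Y, Z} : Set Plane))
    (heE : Sbtw ℝ X e Y ∨ Sbtw ℝ X e Z ∨ Sbtw ℝ Y e Z) (hfT : f ∈ openTriangle X Y Z) :
    ∃ a b c : Plane, ({a, b, c} : Set Plane) = {X, Y, Z} ∧ Sbtw ℝ a e c ∧ Sbtw ℝ b f e := by
  simp only [insert_subset_iff, singleton_subset_iff, Finset.mem_coe] at hV
  simp only [mem_insert_iff, mem_singleton_iff, not_or] at hfV
  obtain ⟨hX, hY, hZ⟩ := hV
  obtain ⟨hfX, hfY, hfZ⟩ := hfV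
  rcases heE with h | h | h
  · have hXZY : ({X, Z, Y} : Set Plane) = {X, Y, Z} := by rw [pair_comm]
    refine ⟨X, Z, Y, hXZY, h, hG.sbtw_of_sbtw_of_mem_openTriangle (hXZY ▸ hT) hX hZ hY he hf
      hXZ hYZ.symm hfZ h (by rwa [openTriangle_swap_right])⟩
  · exact ⟨X, Y, Z, rfl, h,
      hG.sbtw_of_sbtw_of_mem_openTriangle hT hX hY hZ he hf hXY hYZ hfY h hfT⟩
  · have hYXZ : ({Y, X, Z} : Set Plane) = {X, Y, Z} := insert_comm Y X {Z}
    refine ⟨Y, X, Z, hYXZ, h, hG.sbtw_of_sbtw_of_mem_openTriangle (hYXZ ▸ hT) hY hX hZ he hf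
      hXY.symm hXZ hfX h (by rwa [openTriangle_swap_left])⟩

theorem triangle_extra_guards (hG : NoPointHiddenTwice G P) (hGP : ↑G ⊆ P)
    (hT : convexHull ℝ {X, Y, Z} ⊆ P) (hV : {X, Y, Z} ⊆ (G : Set Plane)) (hXY : X ≠ Y)
    (hYZ : Y ≠ Z) (hXZ : X ≠ Z) :
    (((G : Set Plane) ∩ convexHull ℝ {X, Y, Z}) \ {X, Y, Z}).ncard ≤ 2 ∧
      ((((G : Set Plane) ∩ convexHull ℝ {X, Y, Z}) \ {X, Y, Z}).ncard = 2 →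
        ∃ e f, e ≠ f ∧ ((G : Set Plane) ∩ convexHull ℝ {X, Y, Z}) \ {X, Y, Z} = {e, f} ∧
          ∃ a b c : Plane, ({a, b, c} : Set Plane) = {X, Y, Z} ∧ Sbtw ℝ a e c ∧ Sbtw ℝ b f e) := by
  set extra := ((G : Set Plane) ∩ convexHull ℝ {X, Y, Z}) \ {X, Y, Z}
  set edges := {x | Sbtw ℝ X x Y ∨ Sbtw ℝ X x Z ∨ Sbtw ℝ Y x Z}
  have hcover : extra ⊆ edges ∪ openTriangle X Y Z := fun x hx =>
    sbtw_or_mem_openTriangle_of_mem_convexHull hx.1.2 (fun h => hx.2 (by simp [h]))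
      (fun h => hx.2 (by simp [h])) (fun h => hx.2 (by simp [h]))
  have hX : X ∈ G := hV (by simp)
  have hY : Y ∈ G := hV (by simp)
  have hZ : Z ∈ G := hV (by simp)
  have hedges : (extra ∩ edges).Subsingleton := fun x hx y hy =>
    hG.eq_of_sbtw_edges hGP hX hY hZ hx.1.1.1 hy.1.1.1 hx.2 hy.2
  have hinterior : (extra ∩ openTriangle X Y Z).Subsingleton := fun x hx y hy =>
    hG.eq_of_mem_openTriangle hT hV hXY hYZ hXZ hx.1.1.1 hy.1.1.1 hx.1.2 hy.1.2 hx.2 hy.2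
  refine ⟨ncard_le_two_of_subset_union hcover hedges hinterior, fun h2 => ?_⟩
  obtain ⟨e, heE, f, hfT, hef, hextra⟩ :=
    exists_eq_pair_of_subset_union hcover hedges hinterior h2
  have he : e ∈ extra := hextra ▸ mem_insert e {f}
  have hf : f ∈ extra := hextra ▸ mem_insert_of_mem e rfl
  exact ⟨e, f, hef, hextra, hG.exists_labeling hT hV hXY hYZ hXZ he.1.1 hf.1.1 hf.2 heE hfT⟩

end NoPointHiddenTwice

/-- Triangle Lemma: If no point of the convex n-gon P is hidden from
two distinct guards, and T is a closed triangle with guards at its corners, then T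
contains at most 5 guards; and if exactly 5, then (after relabeling the corners) the
two extra guards g4, g5 satisfy: g4 is strictly between corners a and c, g5 is
strictly between corner b and g4, and the segment from a to c lies on the boundary
of P. -/
theorem statement10 (n : ℕ) (V : Finset Plane) (P : Set Plane)
    (hP : IsConvexPolygon n V P) (G : Finset Plane) (hG : ↑G ⊆ P)
    (hno2 : ∀ x ∈ P, ∀ g ∈ G, ∀ g' ∈ G, Hidden G g x → Hidden G g' x → g = g')
    (g1 g2 g3 : Plane) (hg1 : g1 ∈ G) (hg2 : g2 ∈ G) (hg3 : g3 ∈ G)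
    (haff : AffineIndependent ℝ ![g1, g2, g3]) :
    ((↑G : Set Plane) ∩ convexHull ℝ {g1, g2, g3}).ncard ≤ 5 ∧
    (((↑G : Set Plane) ∩ convexHull ℝ {g1, g2, g3}).ncard = 5 →
      ∃ a b c g4 g5 : Plane,
        ({a, b, c} : Set Plane) = {g1, g2, g3} ∧ g4 ≠ g5 ∧
        ((↑G : Set Plane) ∩ convexHull ℝ {g1, g2, g3}) \ {a, b, c} = {g4, g5} ∧
        g4 ∈ openSegment ℝ a c ∧ g5 ∈ openSegment ℝ b g4 ∧
        segment ℝ a c ⊆ frontier P) := by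
  obtain ⟨-, -, hPV, -⟩ := hP
  have hPconv : Convex ℝ P := hPV ▸ convex_convexHull ℝ _
  have hXYZ := affineIndependent_iff_not_collinear_set.1 haff
  have h12 := ne₁₂_of_not_collinear hXYZ
  have h23 := ne₂₃_of_not_collinear hXYZ
  have h13 := ne₁₃_of_not_collinear hXYZ
  have hV : {g1, g2, g3} ⊆ (G : Set Plane) := by simp [insert_subset_iff, hg1, hg2, hg3]
  have hT : convexHull ℝ {g1, g2, g3} ⊆ P := convexHull_min (hV.trans hG) hPconv
  have hcard := ncard_sdiff_add_ncard_of_subset (subset_inter hV (subset_convexHull ℝ _))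
    (G.finite_toSet.inter_of_left (convexHull ℝ {g1, g2, g3}))
  rw [ncard_eq_three.2 ⟨g1, g2, g3, h12, h13, h23, rfl⟩] at hcard
  obtain ⟨hle, heq⟩ := NoPointHiddenTwice.triangle_extra_guards hno2 hG hT hV h12 h23 h13
  refine ⟨by omega, fun h5 => ?_⟩
  obtain ⟨e, f, hef, hextra, a, b, c, habc, hace, hbfe⟩ := heq (by omega)
  have hefG : {e, f} ⊆ (G : Set Plane) := hextra ▸ fun x hx => hx.1.1
  have habcG : {a, b, c} ⊆ (G : Set Plane) := habc ▸ hV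
  exact ⟨a, b, c, e, f, habc, hef, habc ▸ hextra, hace.mem_openSegment, hbfe.mem_openSegment,
    NoPointHiddenTwice.segment_subset_frontier hno2 hPconv (hG (habcG (by simp)))
      (hG (habcG (by simp))) (habcG (by simp)) (hefG (by simp)) (hefG (by simp)) hace hbfe⟩
end
end

section
/- Let G ⊆ ℝ² be a finite set of guards and let x ∈ ℝ² be any point. Then x is hidden from some guard of G (there exist g ∈ G and b ∈ G with b ≠ g and b ∈ openSegment ℝ g x) if and only if x lies on a dark ray: there exist g1, g2 ∈ G with g1 ≠ g2 such that no guard of G lies in the open segment openSegment ℝ g2 g1 (so g1 and g2 are visible to each other) and g1 ∈ openSegment ℝ g2 x. -/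
open Set

noncomputable section

/-- A point x is hidden from some guard of G iff x lies on a dark ray:
there are mutually visible guards g1 ≠ g2 with g1 strictly between g2 and x. -/
theorem statement12 (G : Finset Plane) (x : Plane) :
    (∃ g ∈ G, ∃ b ∈ G, b ≠ g ∧ b ∈ openSegment ℝ g x) ↔
    (∃ g1 ∈ G, ∃ g2 ∈ G, g1 ≠ g2 ∧
      (∀ b ∈ G, b ∉ openSegment ℝ g2 g1) ∧ g1 ∈ openSegment ℝ g2 x) := by
  classical
  constructor
  · rintro ⟨g, hg, b, hb, hbg, hmem⟩
    have hxg : x ≠ g := by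
      rintro rfl
      rw [openSegment_same] at hmem
      exact hbg hmem
    have hne : (G.filter (fun c => c ∈ openSegment ℝ g x)).Nonempty :=
      ⟨b, by simp [hb, hmem]⟩
    obtain ⟨c, hc, hmin⟩ := Finset.exists_min_image _ (fun c => dist c g) hne
    simp only [Finset.mem_filter] at hc
    obtain ⟨hcG, hcseg⟩ := hc
    rw [openSegment_eq_image'] at hcseg
    obtain ⟨t, ht, rfl⟩ := hcseg
    have hxg0 : (0:ℝ) < ‖x - g‖ := by
      rw [norm_pos_iff, sub_ne_zero]; exact hxg
    have hcg : g + t • (x - g) ≠ g := by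
      intro h
      have : t • (x - g) = 0 := by
        have := congrArg (· - g) h
        simpa using this
      rcases smul_eq_zero.mp this with h' | h'
      · exact absurd h' (ne_of_gt ht.1)
      · exact hxg (sub_eq_zero.mp h')
    refine ⟨g + t • (x - g), hcG, g, hg, hcg, ?_, ?_⟩
    · intro d hd hdseg
      rw [openSegment_eq_image'] at hdseg
      obtain ⟨s, hs, rfl⟩ := hdseg
      have hsub : g + t • (x - g) - g = t • (x - g) := by abel
      have key : g + s • (g + t • (x - g) - g) ∈ openSegment ℝ g x := by
        rw [openSegment_eq_image']
        exact ⟨s * t, ⟨mul_pos hs.1 ht.1,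
          by nlinarith [hs.1, hs.2, ht.1, ht.2] ⟩, by
          rw [hsub, smul_smul]⟩
      have hle := hmin _ (Finset.mem_filter.mpr ⟨hd, key⟩)
      have hdist1 : dist (g + s • (g + t • (x - g) - g)) g = s * t * ‖x - g‖ := by
        rw [dist_eq_norm, hsub, smul_smul]
        simp [norm_smul, abs_of_pos hs.1, abs_of_pos ht.1]
      have hdist2 : dist (g + t • (x - g)) g = t * ‖x - g‖ := by
        rw [dist_eq_norm]
        simp [hsub, norm_smul, abs_of_pos ht.1]
      rw [hdist1, hdist2] at hle
      have : s * t * ‖x - g‖ < t * ‖x - g‖ := by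
        apply mul_lt_mul_of_pos_right _ hxg0
        nlinarith [hs.1, hs.2, ht.1]
      linarith
    · rw [openSegment_eq_image']
      exact ⟨t, ht, rfl⟩
  · rintro ⟨g1, h1, g2, h2, hne, _, hmem⟩
    exact ⟨g2, h2, g1, h1, hne, hmem⟩
end
end

section
/- Let W be a wedge in ℝ². Then there exists a guard set G ⊆ W with exactly 10 guards such that no point of W is hidden from two distinct guards of G; that is, every point x ∈ W is hidden from at most one guard of G. -/
open Set

noncomputable section

/- ### Auxiliary: an explicit 10-point configuration in the quadrant. -/

/-- x-coordinates of the ten guards (in wedge coordinates). -/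
def pxZ : Fin 10 → ℤ := ![499, 470688, 48, 1, 824, 521, 1683, 0, 22365, 6]
/-- y-coordinates of the ten guards (in wedge coordinates). -/
def pyZ : Fin 10 → ℤ := ![1, 450712655, 16734168, 1778968, 2232, 0, 140, 1728191, 21822933, 23]

def dZ (i j k l : Fin 10) : ℤ :=
  (pxZ j - pxZ i) * (pyZ l - pyZ k) - (pyZ j - pyZ i) * (pxZ l - pxZ k)
def nsZ (i j k l : Fin 10) : ℤ :=
  (pxZ k - pxZ i) * (pyZ l - pyZ k) - (pyZ k - pyZ i) * (pxZ l - pxZ k)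
def ntZ (i j k l : Fin 10) : ℤ :=
  (pxZ k - pxZ i) * (pyZ j - pyZ i) - (pyZ k - pyZ i) * (pxZ j - pxZ i)
def xxZ (i j k l : Fin 10) : ℤ := pxZ i * dZ i j k l + nsZ i j k l * (pxZ j - pxZ i)
def yyZ (i j k l : Fin 10) : ℤ := pyZ i * dZ i j k l + nsZ i j k l * (pyZ j - pyZ i)

def okB (i j k l : Fin 10) : Bool :=
  if dZ i j k l = 0 then decide (nsZ i j k l ≠ 0)
  else if 0 < dZ i j k l then
    decide (nsZ i j k l ≤ dZ i j k l) || decide (ntZ i j k l ≤ dZ i j k l) ||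
    decide (xxZ i j k l < 0) || decide (yyZ i j k l < 0)
  else
    decide (dZ i j k l ≤ nsZ i j k l) || decide (dZ i j k l ≤ ntZ i j k l) ||
    decide (0 < xxZ i j k l) || decide (0 < yyZ i j k l)

set_option maxRecDepth 100000 in
theorem tableT : ∀ i j k l : Fin 10, i ≠ k → j ≠ i → l ≠ k → ¬(k = j ∧ l = i) →
    okB i j k l = true := by decide

theorem distinctT : ∀ i j : Fin 10, pxZ i = pxZ j → pyZ i = pyZ j → i = j := by decide

theorem nonnegT : ∀ i : Fin 10, 0 ≤ pxZ i ∧ 0 ≤ pyZ i := by decide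

/-- real coordinates -/
def pxR (i : Fin 10) : ℝ := (pxZ i : ℝ)
def pyR (i : Fin 10) : ℝ := (pyZ i : ℝ)

lemma cast_dZ (i j k l : Fin 10) : ((dZ i j k l : ℤ) : ℝ) =
    (pxR j - pxR i) * (pyR l - pyR k) - (pyR j - pyR i) * (pxR l - pxR k) := by
  simp only [dZ, pxR, pyR]; push_cast; ring

lemma cast_nsZ (i j k l : Fin 10) : ((nsZ i j k l : ℤ) : ℝ) =
    (pxR k - pxR i) * (pyR l - pyR k) - (pyR k - pyR i) * (pxR l - pxR k) := by
  simp only [nsZ, pxR, pyR]; push_cast; ring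

lemma cast_ntZ (i j k l : Fin 10) : ((ntZ i j k l : ℤ) : ℝ) =
    (pxR k - pxR i) * (pyR j - pyR i) - (pyR k - pyR i) * (pxR j - pxR i) := by
  simp only [ntZ, pxR, pyR]; push_cast; ring

lemma cast_xxZ (i j k l : Fin 10) : ((xxZ i j k l : ℤ) : ℝ) =
    pxR i * ((dZ i j k l : ℤ) : ℝ) + ((nsZ i j k l : ℤ) : ℝ) * (pxR j - pxR i) := by
  simp only [xxZ, pxR, pyR]; push_cast; ring

lemma cast_yyZ (i j k l : Fin 10) : ((yyZ i j k l : ℤ) : ℝ) =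
    pyR i * ((dZ i j k l : ℤ) : ℝ) + ((nsZ i j k l : ℤ) : ℝ) * (pyR j - pyR i) := by
  simp only [yyZ, pxR, pyR]; push_cast; ring

/-- Core arithmetic lemma: a point cannot be simultaneously on the shadow ray of
pair (i,j) and of pair (k,l) with distinct guards i ≠ k. -/
lemma core (i j k l : Fin 10) (hik : i ≠ k) (hji : j ≠ i) (hlk : l ≠ k)
    (s t σ τ : ℝ) (hσ : 1 < σ) (hτ : 1 < τ) (hs : 0 ≤ s) (ht : 0 ≤ t)
    (e1 : s = pxR i + σ * (pxR j - pxR i)) (e2 : t = pyR i + σ * (pyR j - pyR i))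
    (e3 : s = pxR k + τ * (pxR l - pxR k)) (e4 : t = pyR k + τ * (pyR l - pyR k)) :
    False := by
  by_cases hsw : k = j ∧ l = i
  · obtain ⟨hkj, hli'⟩ := hsw
    rw [hkj, hli'] at e3 e4
    have hxx : (σ + τ - 1) * (pxR j - pxR i) = 0 := by linear_combination e3 - e1
    have hyy : (σ + τ - 1) * (pyR j - pyR i) = 0 := by linear_combination e4 - e2
    have h1 : σ + τ - 1 ≠ 0 := by intro h; nlinarith
    have h2 : pxR j = pxR i := by
      rcases mul_eq_zero.mp hxx with h | h
      · exact absurd h h1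
      · linarith
    have h3 : pyR j = pyR i := by
      rcases mul_eq_zero.mp hyy with h | h
      · exact absurd h h1
      · linarith
    have h4 : pxZ j = pxZ i := by simp only [pxR] at h2; exact_mod_cast h2
    have h5 : pyZ j = pyZ i := by simp only [pyR] at h3; exact_mod_cast h3
    exact hji (distinctT j i h4 h5)
  · have hok := tableT i j k l hik hji hlk hsw
    have hD : σ * ((dZ i j k l : ℤ) : ℝ) = ((nsZ i j k l : ℤ) : ℝ) := by
      rw [cast_dZ, cast_nsZ]
      linear_combination (pyR l - pyR k) * e3 - (pyR l - pyR k) * e1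
        + (pxR l - pxR k) * e2 - (pxR l - pxR k) * e4
    have hT : τ * ((dZ i j k l : ℤ) : ℝ) = ((ntZ i j k l : ℤ) : ℝ) := by
      rw [cast_dZ, cast_ntZ]
      linear_combination (pyR j - pyR i) * e3 - (pyR j - pyR i) * e1
        + (pxR j - pxR i) * e2 - (pxR j - pxR i) * e4
    have hX : s * ((dZ i j k l : ℤ) : ℝ) = ((xxZ i j k l : ℤ) : ℝ) := by
      rw [cast_xxZ]
      linear_combination ((dZ i j k l : ℤ) : ℝ) * e1 + (pxR j - pxR i) * hD
    have hY : t * ((dZ i j k l : ℤ) : ℝ) = ((yyZ i j k l : ℤ) : ℝ) := by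
      rw [cast_yyZ]
      linear_combination ((dZ i j k l : ℤ) : ℝ) * e2 + (pyR j - pyR i) * hD
    unfold okB at hok
    split_ifs at hok with h0 h1
    · -- dZ = 0, nsZ ≠ 0
      simp only [decide_eq_true_eq] at hok
      apply hok
      have : ((nsZ i j k l : ℤ) : ℝ) = 0 := by
        rw [← hD, h0]; push_cast; ring
      exact_mod_cast this
    · -- 0 < dZ
      simp only [Bool.or_eq_true, decide_eq_true_eq] at hok
      have hDpos : (0 : ℝ) < ((dZ i j k l : ℤ) : ℝ) := by exact_mod_cast h1
      rcases hok with ((h | h) | h) | h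
      · have h' : ((nsZ i j k l : ℤ) : ℝ) ≤ ((dZ i j k l : ℤ) : ℝ) := by exact_mod_cast h
        nlinarith
      · have h' : ((ntZ i j k l : ℤ) : ℝ) ≤ ((dZ i j k l : ℤ) : ℝ) := by exact_mod_cast h
        nlinarith
      · have h' : ((xxZ i j k l : ℤ) : ℝ) < 0 := by exact_mod_cast h
        nlinarith
      · have h' : ((yyZ i j k l : ℤ) : ℝ) < 0 := by exact_mod_cast h
        nlinarith
    · -- dZ < 0
      simp only [Bool.or_eq_true, decide_eq_true_eq] at hok
      have hDneg : ((dZ i j k l : ℤ) : ℝ) < 0 := by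
        have : dZ i j k l < 0 := by omega
        exact_mod_cast this
      rcases hok with ((h | h) | h) | h
      · have h' : ((dZ i j k l : ℤ) : ℝ) ≤ ((nsZ i j k l : ℤ) : ℝ) := by exact_mod_cast h
        nlinarith
      · have h' : ((dZ i j k l : ℤ) : ℝ) ≤ ((ntZ i j k l : ℤ) : ℝ) := by exact_mod_cast h
        nlinarith
      · have h' : (0 : ℝ) < ((xxZ i j k l : ℤ) : ℝ) := by exact_mod_cast h
        nlinarith
      · have h' : (0 : ℝ) < ((yyZ i j k l : ℤ) : ℝ) := by exact_mod_cast h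
        nlinarith

/-- One can place exactly 10 guards in a wedge W so that every point
of W is hidden from at most one guard. -/
theorem statement14 (W : Set Plane) (hW : IsWedge W) :
    ∃ G : Finset Plane, ↑G ⊆ W ∧ G.card = 10 ∧
      ∀ x ∈ W, ∀ g ∈ G, ∀ g' ∈ G, Hidden G g x → Hidden G g' x → g = g' := by
  classical
  obtain ⟨a, u, v, hli, hWeq⟩ := hW
  subst hWeq
  have hpair := LinearIndependent.pair_iff.mp hli
  set f : Fin 10 → Plane := fun i => a + pxR i • u + pyR i • v with hf
  have hcoord : ∀ (p q p' q' : ℝ), a + p • u + q • v = a + p' • u + q' • v →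
      p = p' ∧ q = q' := by
    intro p q p' q' h
    have h0 : (p - p') • u + (q - q') • v = 0 := by
      have h3 : (a + p • u + q • v) - (a + p' • u + q' • v) = 0 := sub_eq_zero.mpr h
      rw [← h3]; module
    obtain ⟨h1, h2⟩ := hpair _ _ h0
    constructor <;> linarith [sub_eq_zero.mp h1, sub_eq_zero.mp h2]
  have hinj : Function.Injective f := by
    intro i j hij
    obtain ⟨h1, h2⟩ := hcoord _ _ _ _ (by simpa [hf] using hij)
    have hx : pxZ i = pxZ j := by simp only [pxR] at h1; exact_mod_cast h1
    have hy : pyZ i = pyZ j := by simp only [pyR] at h2; exact_mod_cast h2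
    exact distinctT i j hx hy
  refine ⟨Finset.univ.image f, ?_, ?_, ?_⟩
  · intro z hz
    simp only [Finset.coe_image, Finset.coe_univ, Set.image_univ, Set.mem_range] at hz
    obtain ⟨i, rfl⟩ := hz
    refine ⟨pxR i, pyR i, ?_, ?_, by simp only [hf]⟩
    · simp only [pxR]; exact_mod_cast (nonnegT i).1
    · simp only [pyR]; exact_mod_cast (nonnegT i).2
  · rw [Finset.card_image_of_injective _ hinj, Finset.card_univ, Fintype.card_fin]
  · rintro x ⟨s, t, hs, ht, rfl⟩ g hg g' hg' h1 h2
    simp only [Finset.mem_image, Finset.mem_univ, true_and] at hg hg'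
    obtain ⟨i, rfl⟩ := hg
    obtain ⟨k, rfl⟩ := hg'
    by_cases hik : i = k
    · rw [hik]
    exfalso
    -- extract data from the two Hidden hypotheses
    obtain ⟨b, hbG, hbne, hbseg⟩ := h1
    simp only [Finset.mem_image, Finset.mem_univ, true_and] at hbG
    obtain ⟨j, rfl⟩ := hbG
    have hji : j ≠ i := fun h => hbne (by rw [h])
    obtain ⟨α, β, hα, hβ, hαβ, heq⟩ := hbseg
    obtain ⟨b', hbG', hbne', hbseg'⟩ := h2
    simp only [Finset.mem_image, Finset.mem_univ, true_and] at hbG'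
    obtain ⟨l, rfl⟩ := hbG'
    have hlk : l ≠ k := fun h => hbne' (by rw [h])
    obtain ⟨γ, δ, hγ, hδ, hγδ, heq'⟩ := hbseg'
    -- convert to coordinates
    have key : ∀ (α β : ℝ) (i j : Fin 10), 0 < α → 0 < β → α + β = 1 →
        α • f i + β • (a + s • u + t • v) = f j →
        s = pxR i + (1/β) * (pxR j - pxR i) ∧
        t = pyR i + (1/β) * (pyR j - pyR i) ∧ 1 < 1/β := by
      intro α β i j hα hβ hαβ heq
      have hβ' : β ≠ 0 := ne_of_gt hβ
      have ha : α • a + β • a = a := by rw [← add_smul, hαβ, one_smul]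
      have h' : α • (a + pxR i • u + pyR i • v) + β • (a + s • u + t • v)
          = a + pxR j • u + pyR j • v := by simpa only [hf] using heq
      have heq2 : a + (α * pxR i + β * s) • u + (α * pyR i + β * t) • v
          = a + pxR j • u + pyR j • v := by
        calc a + (α * pxR i + β * s) • u + (α * pyR i + β * t) • v
            = (α • (a + pxR i • u + pyR i • v) + β • (a + s • u + t • v))
              + (a - (α • a + β • a)) := by module
          _ = (a + pxR j • u + pyR j • v) + (a - (α • a + β • a)) := by rw [h']
          _ = a + pxR j • u + pyR j • v := by rw [ha]; abel
      obtain ⟨hE1, hE2⟩ := hcoord _ _ _ _ heq2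
      refine ⟨?_, ?_, ?_⟩
      · field_simp
        linear_combination hE1 - pxR i * hαβ
      · field_simp
        linear_combination hE2 - pyR i * hαβ
      · rw [one_lt_div hβ]; linarith
    obtain ⟨e1, e2, hσ⟩ := key α β i j hα hβ hαβ heq
    obtain ⟨e3, e4, hτ⟩ := key γ δ k l hγ hδ hγδ heq'
    exact core i j k l hik hji hlk s t (1/β) (1/δ) hσ hτ hs ht e1 e2 e3 e4

end
end
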